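/- arXiv:1501.01822 — 9 statements merged into one kernel-verified Lean document; each statement's English description precedes it below -/
import Mathlib

section
/- Let n ≥ 1, let σ : Fin n → ℝ → ℝ be continuous functions, let a ≤ b be real numbers, and set U(t) = max_{i} σ_i(t) and L(t) = min_{i} σ_i(t) (maximum and minimum over the finite index set). Assume U(t) + L(t) = 0 for all t ∈ [a,b]. Let f : ℝ → ℝ be a measurable function such that for every t ∈ [a,b] there exists an index i with f(t) = σ_i(t). Then ∫_a^b max_i |f(t) − σ_i(t)| dt = ∫_a^b |f(t)| dt + ∫_a^b U(t) dt. In particular, the difference between ∫_a^b max_i |f(t) − σ_i(t)| dt and ∫_a^b |f(t)| dt does not depend on f. -/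
/-!
Pointwise, `max_i |y - σ_i| = max (y - L) (U - y)` for every real `y`; when `L = -U` this is
`|y| + U`. So on `[a,b]` the integrand equals `|f t| + U t`, and the integral splits, `|f|` being
integrable because `f` takes values in `[L, U] = [-U, U]`.
-/

namespace Finset

variable {ι α : Type*} [AddCommGroup α] [LinearOrder α] [IsOrderedAddMonoid α]
  (s : Finset ι) (H : s.Nonempty) (x : ι → α)

theorem sup'_abs_sub_eq_max (y : α) :
    s.sup' H (fun i => |y - x i|) = max (y - s.inf' H x) (s.sup' H x - y) := by
  apply le_antisymm
  · refine sup'_le _ _ fun i hi => abs_sub_le_iff.2 ⟨?_, ?_⟩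
    · exact le_max_of_le_left (sub_le_sub_left (inf'_le x hi) y)
    · exact le_max_of_le_right (sub_le_sub_right (le_sup' x hi) y)
  · obtain ⟨j, hj, hjinf⟩ := exists_mem_eq_inf' H x
    obtain ⟨k, hk, hksup⟩ := exists_mem_eq_sup' H x
    refine max_le ?_ ?_
    · rw [hjinf]
      exact (le_abs_self _).trans (le_sup' (fun i => |y - x i|) hj)
    · rw [hksup]
      exact (le_abs_self _).trans ((abs_sub_comm _ _).trans_le (le_sup' (fun i => |y - x i|) hk))

variable {s H x}

theorem sup'_abs_sub_of_inf'_eq_neg (h : s.inf' H x = -s.sup' H x) (y : α) :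
    s.sup' H (fun i => |y - x i|) = |y| + s.sup' H x := by
  rw [sup'_abs_sub_eq_max, h, sub_neg_eq_add, abs_eq_max_neg, ← max_add_add_right,
    sub_eq_neg_add]

theorem abs_le_sup'_of_inf'_eq_neg (h : s.inf' H x = -s.sup' H x) {j : ι} (hj : j ∈ s) :
    |x j| ≤ s.sup' H x :=
  abs_le.2 ⟨h ▸ inf'_le x hj, le_sup' x hj⟩

end Finset

/-- Lemma 2 of the paper: in ℝ¹, with the ideal trajectory normalized so that
`U + L = 0` on `[a,b]`, the integral of the distance from a trajectoid `f` to the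
farthest entity equals `∫ |f|` plus a term independent of `f`. -/
theorem stmt0 (n : ℕ) (hn : 1 ≤ n)
    (σ : Fin n → ℝ → ℝ) (hσ : ∀ i, Continuous (σ i))
    (a b : ℝ) (hab : a ≤ b)
    (U L : ℝ → ℝ)
    (hU : ∀ t, U t = Finset.univ.sup' ⟨⟨0, hn⟩, Finset.mem_univ _⟩ (fun i => σ i t))
    (hL : ∀ t, L t = Finset.univ.inf' ⟨⟨0, hn⟩, Finset.mem_univ _⟩ (fun i => σ i t))
    (hUL : ∀ t ∈ Set.Icc a b, U t + L t = 0)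
    (f : ℝ → ℝ) (hf : Measurable f)
    (hfon : ∀ t ∈ Set.Icc a b, ∃ i, f t = σ i t) :
    (∫ t in a..b, Finset.univ.sup' ⟨⟨0, hn⟩, Finset.mem_univ _⟩ (fun i => |f t - σ i t|))
      = (∫ t in a..b, |f t|) + ∫ t in a..b, U t := by
  have hsymm : ∀ t ∈ Set.Icc a b, Finset.univ.inf' ⟨⟨0, hn⟩, Finset.mem_univ _⟩ (σ · t)
      = -Finset.univ.sup' ⟨⟨0, hn⟩, Finset.mem_univ _⟩ (σ · t) := fun t ht => by
    rw [← hU, ← hL]; linarith [hUL t ht]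
  have hUint : IntervalIntegrable U MeasureTheory.volume a b := by
    rw [show U = _ from funext hU]
    exact (Continuous.finset_sup'_apply _ fun i _ => hσ i).intervalIntegrable a b
  have hfint : IntervalIntegrable (|f ·|) MeasureTheory.volume a b := by
    refine hUint.mono_fun' hf.abs.aestronglyMeasurable
      (MeasureTheory.ae_restrict_of_forall_mem measurableSet_uIoc fun t ht => ?_)
    have ht' : t ∈ Set.Icc a b := Set.uIcc_of_le hab ▸ Set.uIoc_subset_uIcc ht
    obtain ⟨i, hi⟩ := hfon t ht'
    dsimp only
    rw [Real.norm_eq_abs, abs_abs, hi, hU]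
    exact Finset.abs_le_sup'_of_inf'_eq_neg (hsymm t ht') (Finset.mem_univ i)
  have hcong : Set.EqOn (fun t => Finset.univ.sup' ⟨⟨0, hn⟩, Finset.mem_univ _⟩
      (fun i => |f t - σ i t|)) (fun t => |f t| + U t) (Set.uIcc a b) := fun t ht => by
    rw [Set.uIcc_of_le hab] at ht
    simp only [hU, Finset.sup'_abs_sub_of_inf'_eq_neg (hsymm t ht)]
  rw [intervalIntegral.integral_congr hcong, intervalIntegral.integral_add hfint hUint]
end

section
/- Let S ⊆ ℝ be a nonempty finite set and let m = (max S + min S)/2. Then for all p, q ∈ ℝ, if |p − m| ≤ |q − m| then max_{s∈S} |p − s| ≤ max_{s∈S} |q − s|. -/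
/-!
Every point of `S` lies in `[min S, max S]`, so the farthest point of `S` from `x` is one of the
two endpoints, and `max (max S - x) (x - min S) = |x - m| + (max S - min S) / 2`. The farthest
distance is thus an increasing function of `|x - m|`.
-/

variable {α : Type*} [Field α] [LinearOrder α] [IsStrictOrderedRing α]

theorem max_sub_sub_eq_abs_sub_midpoint_add (a b x : α) :
    max (b - x) (x - a) = |x - (a + b) / 2| + (b - a) / 2 := by
  rcases le_total (b - x) (x - a) with h | h
  · rw [max_eq_right h, abs_of_nonneg (by linarith)]
    ring
  · rw [max_eq_left h, abs_of_nonpos (by linarith)]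
    ring

theorem Finset.sup'_abs_sub_eq_max_sub_sub (S : Finset α) (hS : S.Nonempty) (x : α) :
    S.sup' hS (fun s => |x - s|) = max (S.max' hS - x) (x - S.min' hS) := by
  apply le_antisymm
  · refine Finset.sup'_le hS _ fun s hs => ?_
    rw [abs_sub_comm]
    exact abs_sub_le_max_sub (S.min'_le s hs) (S.le_max' s hs) x
  · refine max_le ?_ ?_
    · exact Finset.le_sup'_of_le _ (S.max'_mem hS) (by rw [abs_sub_comm]; exact le_abs_self _)
    · exact Finset.le_sup'_of_le _ (S.min'_mem hS) (le_abs_self _)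

theorem Finset.sup'_abs_sub_eq_abs_sub_midpoint_add (S : Finset α) (hS : S.Nonempty) (x : α) :
    S.sup' hS (fun s => |x - s|) =
      |x - (S.max' hS + S.min' hS) / 2| + (S.max' hS - S.min' hS) / 2 := by
  rw [S.sup'_abs_sub_eq_max_sub_sub, max_sub_sub_eq_abs_sub_midpoint_add, add_comm (S.min' hS)]

/-- In ℝ¹, being closer to the midrange `m` of a nonempty finite set `S` implies being
closer to the farthest point of `S`. -/
theorem stmt3 (S : Finset ℝ) (hS : S.Nonempty) (p q : ℝ)
    (h : |p - (S.max' hS + S.min' hS) / 2| ≤ |q - (S.max' hS + S.min' hS) / 2|) :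
    S.sup' hS (fun s => |p - s|) ≤ S.sup' hS (fun s => |q - s|) := by
  rw [S.sup'_abs_sub_eq_abs_sub_midpoint_add, S.sup'_abs_sub_eq_abs_sub_midpoint_add]
  exact add_le_add_left h _
end

section
/- There exist a finite set P of points in the Euclidean plane ℝ², a point m ∈ ℝ², and points p, q ∈ P such that: (i) for every c ∈ ℝ², max_{x∈P} dist(m, x) ≤ max_{x∈P} dist(c, x) (so m is the center of the smallest enclosing disk of P); (ii) dist(p, m) < dist(q, m); and (iii) max_{x∈P} dist(q, x) < max_{x∈P} dist(p, x). -/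
/-!
The vertices of an equilateral triangle of circumradius `2` about the origin have the origin as
centroid, so for every point `c` the sum of the squared distances from `c` to them is
`3‖c‖² + 12 ≥ 12`. Hence some vertex is at distance at least `2` from `c`, and the origin is the
center of the smallest enclosing disk of the vertices together with `p = (-3/5, 0)` and
`q = (4/5, 0)`. Now `p` is closer to the center than `q`, but `p` is at distance `13/5` from the
vertex `(2, 0)`, whereas every point of the set is within distance `√156 / 5` of `q`.
-/

open Finset

section Centroid

variable {E ι : Type*} [NormedAddCommGroup E] [InnerProductSpace ℝ E]

theorem sum_dist_sq_eq_of_sum_sub_eq_zero (s : Finset ι) (v : ι → E) {m : E}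
    (hsum : ∑ i ∈ s, (v i - m) = 0) (x : E) :
    ∑ i ∈ s, dist x (v i) ^ 2 = #s * dist x m ^ 2 + ∑ i ∈ s, dist (v i) m ^ 2 := by
  have h (i : ι) : dist x (v i) ^ 2
      = dist x m ^ 2 - 2 * inner ℝ (x - m) (v i - m) + dist (v i) m ^ 2 := by
    rw [dist_eq_norm, dist_eq_norm, dist_eq_norm, ← norm_sub_sq_real, sub_sub_sub_cancel_right]
  simp only [h, sum_add_distrib, sum_sub_distrib, ← mul_sum, ← inner_sum, hsum, inner_zero_right,
    sum_const, nsmul_eq_mul]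
  ring

theorem exists_le_dist_of_sum_sub_eq_zero [Fintype ι] [Nonempty ι] (v : ι → E) {m : E} {r : ℝ}
    (hsum : ∑ i, (v i - m) = 0) (hr : ∀ i, dist (v i) m = r) (x : E) :
    ∃ i, r ≤ dist x (v i) := by
  by_contra! hlt
  have hlt_sq : ∑ i, dist x (v i) ^ 2 < ∑ _i : ι, r ^ 2 :=
    sum_lt_sum_of_nonempty univ_nonempty fun i _ => pow_lt_pow_left₀ (hlt i) dist_nonneg two_ne_zero
  simp only [sum_dist_sq_eq_of_sum_sub_eq_zero _ _ hsum, hr, sum_const, nsmul_eq_mul] at hlt_sq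
  have : (0 : ℝ) ≤ #(univ : Finset ι) * dist x m ^ 2 := by positivity
  linarith

end Centroid

theorem EuclideanSpace.dist_vec2 (a b c d : ℝ) :
    dist !₂[a, b] !₂[c, d] = √((a - c) ^ 2 + (b - d) ^ 2) := by
  simp [EuclideanSpace.dist_eq, Fin.sum_univ_two, Real.dist_eq, sq_abs]

namespace EnclosingDiskExample

open EuclideanSpace

local notation "ℝ²" => EuclideanSpace ℝ (Fin 2)

noncomputable section

def triangle : Fin 3 → ℝ² := ![!₂[2, 0], !₂[-1, √3], !₂[-1, -√3]]

def center : ℝ² := !₂[0, 0]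

def p : ℝ² := !₂[-3 / 5, 0]

def q : ℝ² := !₂[4 / 5, 0]

def points : Finset ℝ² :=
  {triangle 0, triangle 1, triangle 2, p, q}

end

theorem points_nonempty : points.Nonempty := insert_nonempty _ _

theorem triangle_mem_points (i : Fin 3) : triangle i ∈ points := by
  fin_cases i <;> simp [points]

theorem p_mem_points : p ∈ points := by simp [points]

theorem q_mem_points : q ∈ points := by simp [points]

theorem mem_points {x : ℝ²} (hx : x ∈ points) : (∃ i, x = triangle i) ∨ x = p ∨ x = q := by
  simp only [points, mem_insert, mem_singleton] at hx
  rcases hx with h | h | h | h | h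
  exacts [.inl ⟨0, h⟩, .inl ⟨1, h⟩, .inl ⟨2, h⟩, .inr (.inl h), .inr (.inr h)]

theorem sum_triangle_sub_center : ∑ i, (triangle i - center) = 0 := by
  ext j
  fin_cases j <;> simp [triangle, center, Fin.sum_univ_three]
  norm_num

theorem dist_triangle_center (i : Fin 3) : dist (triangle i) center = 2 := by
  fin_cases i <;> simp [triangle, center, dist_vec2] <;> norm_num

theorem dist_center_le_two_of_mem_points {x : ℝ²} (hx : x ∈ points) : dist center x ≤ 2 := by
  obtain ⟨i, rfl⟩ | rfl | rfl := mem_points hx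
  · exact (dist_comm _ _).trans_le (dist_triangle_center i).le
  all_goals simp only [center, p, q, dist_vec2, Real.sqrt_le_left zero_le_two]; norm_num

theorem dist_p_center_lt_dist_q_center : dist p center < dist q center := by
  rw [p, q, center, dist_vec2, dist_vec2]
  exact Real.sqrt_lt_sqrt (by positivity) (by norm_num)

theorem dist_p_triangle_zero : dist p (triangle 0) = 13 / 5 := by
  simp only [p, triangle, Matrix.cons_val_zero, dist_vec2]
  rw [Real.sqrt_eq_iff_eq_sq (by positivity) (by norm_num)]
  norm_num

theorem dist_q_lt_of_mem_points {x : ℝ²} (hx : x ∈ points) : dist q x < 13 / 5 := by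
  obtain ⟨i, rfl⟩ | rfl | rfl := mem_points hx
  · fin_cases i <;> simp [triangle, q, dist_vec2, Real.sqrt_lt'] <;> norm_num
  all_goals simp only [q, p, dist_vec2, Real.sqrt_lt' (by norm_num : (0 : ℝ) < 13 / 5)]; norm_num

end EnclosingDiskExample

open EnclosingDiskExample in
/-- In the Euclidean plane there is a finite point set `P`, the center `m` of its
smallest enclosing disk, and points `p, q ∈ P` such that `p` is closer to `m` than `q`,
yet `q` has a strictly smaller distance to its farthest point of `P` than `p` does. -/
theorem stmt4 :
    ∃ (P : Finset (EuclideanSpace ℝ (Fin 2))) (hP : P.Nonempty)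
      (m : EuclideanSpace ℝ (Fin 2)) (p q : EuclideanSpace ℝ (Fin 2)),
      p ∈ P ∧ q ∈ P
      ∧ (∀ c : EuclideanSpace ℝ (Fin 2),
          P.sup' hP (fun x => dist m x) ≤ P.sup' hP (fun x => dist c x))
      ∧ dist p m < dist q m
      ∧ P.sup' hP (fun x => dist q x) < P.sup' hP (fun x => dist p x) := by
  refine ⟨points, points_nonempty, center, p, q, p_mem_points, q_mem_points, fun c => ?_,
    dist_p_center_lt_dist_q_center, ?_⟩
  · obtain ⟨i, hi⟩ :=
      exists_le_dist_of_sum_sub_eq_zero triangle sum_triangle_sub_center dist_triangle_center c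
    exact (sup'_le _ _ fun x => dist_center_le_two_of_mem_points).trans
      (hi.trans (le_sup' _ (triangle_mem_points i)))
  · calc points.sup' points_nonempty (dist q) < 13 / 5 := (sup'_lt_iff _).2 fun x => dist_q_lt_of_mem_points
      _ = dist p (triangle 0) := dist_p_triangle_zero.symm
      _ ≤ points.sup' points_nonempty (dist p) := le_sup' _ (triangle_mem_points 0)
end

section
/- Let n ≥ 1 and let f_1, …, f_n : ℝ → ℝ be affine functions. Then the set of points t ∈ ℝ at which the midrange function t ↦ (max_{1≤i≤n} f_i(t) + min_{1≤i≤n} f_i(t))/2 is not differentiable is finite and has at most n elements. -/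
/-!
Away from the kinks of the upper and lower envelopes both envelopes, hence the midrange, are
locally a single line. To a kink `t` of the upper envelope assign the line `rightLine t` that
carries the envelope just to the right of `t`: the top line at `t` of largest slope. Slopes
increase along the upper envelope, so distinct kinks receive distinct lines; dually for the lower
envelope, with the bottom line of smallest slope. A line on top at `t₁` and at the bottom at `t₂`
has the smallest slope if `t₁ < t₂` and the largest if `t₂ < t₁`, and then it cannot be assigned
by both envelopes. So the kinks of the two envelopes together inject into the `n` lines.
-/

open Finset Filter Topology

namespace AffineEnvelope

lemma slope_le_of_crossing {a₁ b₁ a₂ b₂ t₁ t₂ : ℝ} (ht : t₁ < t₂)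
    (h₁ : a₂ * t₁ + b₂ ≤ a₁ * t₁ + b₁) (h₂ : a₁ * t₂ + b₁ ≤ a₂ * t₂ + b₂) : a₁ ≤ a₂ := by
  nlinarith

variable {ι : Type*} (a b : ι → ℝ)

def IsTopLine (t : ℝ) (i : ι) : Prop := ∀ j, a j * t + b j ≤ a i * t + b i

lemma isTopLine_neg_iff {t : ℝ} {i : ι} :
    IsTopLine (-a) (-b) t i ↔ ∀ j, a i * t + b i ≤ a j * t + b j := by
  simp only [IsTopLine, Pi.neg_apply]
  exact forall_congr' fun j => by constructor <;> intro h <;> linarith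

variable {a b}

lemma IsTopLine.slope_le {t₁ t₂ : ℝ} {i j : ι} (ht : t₁ < t₂) (hi : IsTopLine a b t₁ i)
    (hj : IsTopLine a b t₂ j) : a i ≤ a j :=
  slope_le_of_crossing ht (hi j) (hj i)

variable (a b)

lemma exists_isTopLine [Finite ι] [Nonempty ι] (t : ℝ) : ∃ i, IsTopLine a b t i :=
  Finite.exists_max fun i => a i * t + b i

lemma eventually_exists_isTopLine [Finite ι] [Nonempty ι] (t : ℝ) :
    ∀ᶠ s in 𝓝 t, ∃ i, IsTopLine a b t i ∧ IsTopLine a b s i := by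
  obtain ⟨i₀, hi₀⟩ := exists_isTopLine a b t
  have hbelow : ∀ᶠ s in 𝓝 t, ∀ j, ¬ IsTopLine a b t j → a j * s + b j < a i₀ * s + b i₀ := by
    refine eventually_all.2 fun j => ?_
    by_cases hj : IsTopLine a b t j
    · exact Eventually.of_forall fun _ h => absurd hj h
    · have hlt : a j * t + b j < a i₀ * t + b i₀ :=
        lt_of_not_ge fun h => hj fun k => (hi₀ k).trans h
      exact (ContinuousAt.eventually_lt (by fun_prop) (by fun_prop) hlt).mono fun _ hs _ => hs
  filter_upwards [hbelow] with s hs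
  obtain ⟨i, hi⟩ := exists_isTopLine a b s
  exact ⟨i, by_contra fun h => (hs i h).not_ge (hi i₀), hi⟩

def kinks : Set ℝ := {t | ∃ i j, IsTopLine a b t i ∧ IsTopLine a b t j ∧ a i < a j}

section Envelopes

variable [Fintype ι] [Nonempty ι]

noncomputable def upperEnvelope (s : ℝ) : ℝ := univ.sup' univ_nonempty fun i => a i * s + b i

noncomputable def lowerEnvelope (s : ℝ) : ℝ := univ.inf' univ_nonempty fun i => a i * s + b i

noncomputable def midrange (s : ℝ) : ℝ := (upperEnvelope a b s + lowerEnvelope a b s) / 2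

lemma upperEnvelope_eq_of_isTopLine {s : ℝ} {i : ι} (h : IsTopLine a b s i) :
    upperEnvelope a b s = a i * s + b i :=
  le_antisymm (sup'_le _ _ fun j _ => h j) (le_sup' (fun j => a j * s + b j) (mem_univ i))

lemma lowerEnvelope_eq_neg_upperEnvelope : lowerEnvelope a b = -upperEnvelope (-a) (-b) := by
  funext s
  obtain ⟨i, hi⟩ := exists_isTopLine (-a) (-b) s
  rw [Pi.neg_apply, upperEnvelope_eq_of_isTopLine _ _ hi, Pi.neg_apply, Pi.neg_apply]
  refine le_antisymm ((inf'_le _ (mem_univ i)).trans_eq (by ring)) ?_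
  exact le_inf' _ _ fun j _ => by linarith [(isTopLine_neg_iff a b).1 hi j]

lemma differentiableAt_upperEnvelope {t : ℝ} (ht : t ∉ kinks a b) :
    DifferentiableAt ℝ (upperEnvelope a b) t := by
  obtain ⟨i₀, hi₀⟩ := exists_isTopLine a b t
  have hline : upperEnvelope a b =ᶠ[𝓝 t] fun s => a i₀ * s + b i₀ := by
    filter_upwards [eventually_exists_isTopLine a b t] with s ⟨i, hit, his⟩
    have hslope : a i = a i₀ := le_antisymm (not_lt.1 fun h => ht ⟨i₀, i, hi₀, hit, h⟩)
      (not_lt.1 fun h => ht ⟨i, i₀, hit, hi₀, h⟩)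
    have hintercept : b i = b i₀ := by
      have := le_antisymm (hi₀ i) (hit i₀)
      rw [hslope] at this
      linarith
    rw [upperEnvelope_eq_of_isTopLine a b his, hslope, hintercept]
  exact hline.differentiableAt_iff.2 (by fun_prop)

lemma differentiableAt_midrange {t : ℝ} (hupper : t ∉ kinks a b)
    (hlower : t ∉ kinks (-a) (-b)) : DifferentiableAt ℝ (midrange a b) t := by
  have hL : DifferentiableAt ℝ (lowerEnvelope a b) t := by
    rw [lowerEnvelope_eq_neg_upperEnvelope]
    exact (differentiableAt_upperEnvelope _ _ hlower).neg
  exact ((differentiableAt_upperEnvelope a b hupper).add hL).div_const 2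

end Envelopes

section RightLine

variable [Finite ι] [Nonempty ι]

lemma exists_isTopLine_forall_slope_le (t : ℝ) :
    ∃ j, IsTopLine a b t j ∧ ∀ i, IsTopLine a b t i → a i ≤ a j := by
  classical
  have := Fintype.ofFinite ι
  obtain ⟨i₀, hi₀⟩ := exists_isTopLine a b t
  obtain ⟨j, hj, hmax⟩ := exists_max_image ({i | IsTopLine a b t i} : Finset ι) a ⟨i₀, by simpa⟩
  exact ⟨j, by simpa using hj, fun i hi => hmax i (by simpa)⟩

noncomputable def rightLine (t : ℝ) : ι := (exists_isTopLine_forall_slope_le a b t).choose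

lemma isTopLine_rightLine (t : ℝ) : IsTopLine a b t (rightLine a b t) :=
  (exists_isTopLine_forall_slope_le a b t).choose_spec.1

lemma slope_le_rightLine {t : ℝ} {i : ι} (hi : IsTopLine a b t i) : a i ≤ a (rightLine a b t) :=
  (exists_isTopLine_forall_slope_le a b t).choose_spec.2 i hi

lemma exists_slope_lt_rightLine {t : ℝ} (ht : t ∈ kinks a b) :
    ∃ i, IsTopLine a b t i ∧ a i < a (rightLine a b t) :=
  let ⟨i, _, hi, hj, hij⟩ := ht
  ⟨i, hi, hij.trans_le (slope_le_rightLine a b hj)⟩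

lemma strictMonoOn_slope_rightLine : StrictMonoOn (fun t => a (rightLine a b t)) (kinks a b) :=
  fun t₁ _ _ h₂ ht =>
    let ⟨_, hi, hlt⟩ := exists_slope_lt_rightLine a b h₂
    ((isTopLine_rightLine a b t₁).slope_le ht hi).trans_lt hlt

lemma injOn_rightLine : Set.InjOn (rightLine a b) (kinks a b) :=
  (strictMonoOn_slope_rightLine a b).injOn.of_comp

lemma rightLine_ne_rightLine_neg {t₁ t₂ : ℝ} (h₁ : t₁ ∈ kinks a b)
    (h₂ : t₂ ∈ kinks (-a) (-b)) : rightLine a b t₁ ≠ rightLine (-a) (-b) t₂ := by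
  intro heq
  set j := rightLine a b t₁
  have htop : IsTopLine a b t₁ j := isTopLine_rightLine a b t₁
  have hbot : ∀ k, a j * t₂ + b j ≤ a k * t₂ + b k :=
    (isTopLine_neg_iff a b).1 (heq ▸ isTopLine_rightLine (-a) (-b) t₂)
  obtain ⟨i₁, -, hlt₁⟩ := exists_slope_lt_rightLine a b h₁
  obtain ⟨i₂, -, hlt₂⟩ := exists_slope_lt_rightLine (-a) (-b) h₂
  rw [← heq, Pi.neg_apply, Pi.neg_apply, neg_lt_neg_iff] at hlt₂
  rcases lt_trichotomy t₁ t₂ with h | rfl | h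
  · exact hlt₁.not_ge (slope_le_of_crossing h (htop i₁) (hbot i₁))
  · exact hlt₂.not_ge (slope_le_rightLine a b fun k => (htop k).trans (hbot i₂))
  · exact hlt₂.not_ge (slope_le_of_crossing h (hbot i₂) (htop i₂))

lemma encard_kinks_union_le :
    (kinks a b ∪ kinks (-a) (-b)).encard ≤ ENat.card ι := by
  have hdisj : Disjoint (rightLine a b '' kinks a b) (rightLine (-a) (-b) '' kinks (-a) (-b)) :=
    Set.disjoint_left.2 fun _ ⟨_, h₁, he₁⟩ ⟨_, h₂, he₂⟩ =>
      rightLine_ne_rightLine_neg a b h₁ h₂ (he₁.trans he₂.symm)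
  calc (kinks a b ∪ kinks (-a) (-b)).encard
      ≤ (kinks a b).encard + (kinks (-a) (-b)).encard := Set.encard_union_le _ _
    _ = (rightLine a b '' kinks a b ∪ rightLine (-a) (-b) '' kinks (-a) (-b)).encard := by
      rw [Set.encard_union_eq hdisj, (injOn_rightLine a b).encard_image,
        (injOn_rightLine (-a) (-b)).encard_image]
    _ ≤ ENat.card ι := (Set.encard_le_encard (Set.subset_univ _)).trans_eq (Set.encard_univ ι)

end RightLine

lemma encard_setOf_not_differentiableAt_midrange_le [Fintype ι] [Nonempty ι] :
    {t | ¬ DifferentiableAt ℝ (midrange a b) t}.encard ≤ Fintype.card ι := by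
  refine (Set.encard_le_encard fun t ht => ?_).trans
    ((encard_kinks_union_le a b).trans_eq ENat.card_eq_coe_fintype_card)
  by_contra hkink
  rw [Set.mem_union, not_or] at hkink
  exact ht (differentiableAt_midrange a b hkink.1 hkink.2)

end AffineEnvelope

open AffineEnvelope in
/-- The midrange (average of upper and lower envelope) of `n ≥ 1` affine functions has
at most `n` points of non-differentiability. -/
theorem stmt6 (n : ℕ) (hn : 1 ≤ n) (a b : Fin n → ℝ) :
    {t : ℝ | ¬ DifferentiableAt ℝ
        (fun s => (Finset.univ.sup' ⟨⟨0, hn⟩, Finset.mem_univ _⟩ (fun i => a i * s + b i)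
          + Finset.univ.inf' ⟨⟨0, hn⟩, Finset.mem_univ _⟩ (fun i => a i * s + b i)) / 2) t}.Finite
    ∧ {t : ℝ | ¬ DifferentiableAt ℝ
        (fun s => (Finset.univ.sup' ⟨⟨0, hn⟩, Finset.mem_univ _⟩ (fun i => a i * s + b i)
          + Finset.univ.inf' ⟨⟨0, hn⟩, Finset.mem_univ _⟩ (fun i => a i * s + b i)) / 2)
          t}.encard ≤ (n : ℕ) := by
  have : Nonempty (Fin n) := ⟨⟨0, hn⟩⟩
  have hcard := encard_setOf_not_differentiableAt_midrange_le a b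
  rw [Fintype.card_fin] at hcard
  exact ⟨Set.finite_of_encard_le_coe hcard, hcard⟩
end

section
/- Let n ≥ 1, τ ≥ 1, let t_0 < t_1 < … < t_τ be real numbers, and let σ_1, …, σ_n : ℝ → ℝ be continuous functions each of whose restriction to every interval [t_j, t_{j+1}] is affine. Define the ideal trajectory I(t) = (max_i σ_i(t) + min_i σ_i(t))/2. Then there exist K ≤ τ(n + 2) and a partition t_0 = s_0 < s_1 < … < s_K = t_τ such that I restricted to each interval [s_{k−1}, s_k] is affine. -/
/-!
On a segment `[t_j, t_{j+1}]` every `σ_i` is a line, so `I` is the average of the upper and the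
lower envelope of `n` lines. `I` is affine on every interval free of kinks, i.e. of points where two
lines of different slopes attain the same envelope: away from kinks the set of lines attaining an
envelope is locally constant, and an interval is connected. Send each kink of the upper envelope
to its steepest attaining line and each kink of the lower envelope to its least steep one. No line
is hit twice, because at a kink the line hit is met by a line of another slope attaining the same
envelope, and that line beats it everywhere on one side of the kink. So a segment carries at most
`n` kinks, and together with the `τ - 1` interior breakpoints `t_j` they cut `[t_0, t_τ]` into at
most `τ (n + 1)` pieces on which `I` is affine.
-/

open Finset Set Filter Topology

def HasAffinePieces (f : ℝ → ℝ) (a b : ℝ) (K : ℕ) : Prop :=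
  ∃ s : Fin (K + 1) → ℝ, StrictMono s ∧ s 0 = a ∧ s (Fin.last K) = b ∧
    ∀ k : Fin K, ∃ c d : ℝ, ∀ t ∈ Icc (s k.castSucc) (s k.succ), f t = c * t + d

namespace HasAffinePieces

variable {f : ℝ → ℝ} {a b : ℝ} {K : ℕ}

lemma zero (f : ℝ → ℝ) (a : ℝ) : HasAffinePieces f a a 0 :=
  ⟨fun _ => a, Fin.strictMono_iff_lt_succ.2 fun k => k.elim0, rfl, rfl, fun k => k.elim0⟩

lemma snoc (h : HasAffinePieces f a b K) {c : ℝ} (hbc : b < c)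
    (hf : ∃ p q : ℝ, ∀ t ∈ Icc b c, f t = p * t + q) : HasAffinePieces f a c (K + 1) := by
  obtain ⟨s, hs, hs0, hsK, hpieces⟩ := h
  refine ⟨Fin.snoc s c, ?_, (Fin.snoc_castSucc (α := fun _ => ℝ) c s 0).trans hs0, by simp,
    fun k => ?_⟩
  · rw [← Fin.insertNth_last']
    exact Fin.strictMono_insertNth_last hs c (hsK ▸ hbc)
  · obtain ⟨k, rfl⟩ | rfl := k.eq_castSucc_or_eq_last
    · rw [Fin.succ_castSucc, Fin.snoc_castSucc, Fin.snoc_castSucc]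
      exact hpieces k
    · rwa [Fin.snoc_castSucc, Fin.succ_last, Fin.snoc_last, hsK]

end HasAffinePieces

theorem exists_hasAffinePieces_of_finset {f : ℝ → ℝ} (S : Finset ℝ) {a b : ℝ} (hab : a < b)
    (hf : ∀ u v, a ≤ u → u < v → v ≤ b → (∀ x ∈ S, x ∉ Ioo u v) →
      ∃ p q : ℝ, ∀ t ∈ Icc u v, f t = p * t + q) :
    ∃ K ≤ #S + 1, HasAffinePieces f a b K := by
  classical
  induction S using Finset.induction_on_max generalizing b with
  | empty =>
    exact ⟨1, le_rfl, (HasAffinePieces.zero f a).snoc hab (hf a b le_rfl hab le_rfl (by simp))⟩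
  | insert m S hlt ih =>
    have hmS : m ∉ S := fun hmS => (hlt m hmS).false
    by_cases hm : m ∈ Ioo a b
    · obtain ⟨K, hK, h⟩ := ih hm.1 fun u v hu huv hv hS => hf u v hu huv (hv.trans hm.2.le) <|
        Finset.forall_mem_insert .. |>.2 ⟨fun hm' => hm'.2.not_ge hv, hS⟩
      refine ⟨K + 1, by rw [card_insert_of_notMem hmS]; omega, h.snoc hm.2 ?_⟩
      exact hf m b hm.1.le hm.2 le_rfl <| Finset.forall_mem_insert .. |>.2
        ⟨fun hm' => hm'.1.false, fun x hx hx' => (hx'.1.trans (hlt x hx)).false⟩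
    · obtain ⟨K, hK, h⟩ := ih hab fun u v hu huv hv hS => hf u v hu huv hv <|
        Finset.forall_mem_insert .. |>.2 ⟨fun hm' => hm ⟨hu.trans_lt hm'.1, hm'.2.trans_le hv⟩, hS⟩
      exact ⟨K, hK.trans (by rw [card_insert_of_notMem hmS]; omega), h⟩

lemma exists_segment_of_forall_notMem_Ioo {τ : ℕ} (ts : Fin (τ + 1) → ℝ) {u v : ℝ}
    (hu : ts 0 ≤ u) (huv : u < v) (hv : v ≤ ts (Fin.last τ))
    (hts : ∀ k ∈ Finset.Ioo 0 (Fin.last τ), ts k ∉ Ioo u v) :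
    ∃ j : Fin τ, ts j.castSucc ≤ u ∧ v ≤ ts j.succ := by
  set A := univ.filter fun k => v ≤ ts k
  have hA : A.Nonempty := ⟨Fin.last τ, by simpa [A] using hv⟩
  have hmin : v ≤ ts (A.min' hA) := by simpa [A] using A.min'_mem hA
  obtain ⟨j, hj⟩ := Fin.exists_succ_eq_of_ne_zero (x := A.min' hA) fun h0 => by
    rw [h0] at hmin
    exact (hu.trans_lt huv).not_ge hmin
  have hjv : ts j.castSucc < v := by
    by_contra! h
    have := A.min'_le j.castSucc (by simpa [A] using h)
    rw [← hj] at this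
    exact Fin.castSucc_lt_succ.not_ge this
  refine ⟨j, not_lt.1 fun hju => ?_, hj ▸ hmin⟩
  have hj0 : j.castSucc ≠ 0 := fun h0 => (h0 ▸ hju).not_ge hu
  exact hts _ (Finset.mem_Ioo.2 ⟨Fin.pos_iff_ne_zero.2 hj0, Fin.castSucc_lt_last j⟩) ⟨hju, hjv⟩

lemma line_lt_line_of_slope_lt_of_lt {c c' d d' s s' : ℝ} (hs : c' * s + d' = c * s + d)
    (hc : c' < c) (hss' : s < s') : c' * s' + d' < c * s' + d := by
  nlinarith

lemma line_lt_line_of_slope_lt_of_gt {c c' d d' s s' : ℝ} (hs : c' * s + d' = c * s + d)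
    (hc : c' < c) (hss' : s' < s) : c * s' + d < c' * s' + d' := by
  nlinarith

section Lines

variable {ι : Type*} (c d : ι → ℝ)

def IsMaxLineAt (i : ι) (t : ℝ) : Prop := ∀ j, c j * t + d j ≤ c i * t + d i

def IsUpperKink (t : ℝ) : Prop :=
  ∃ i j, IsMaxLineAt c d i t ∧ IsMaxLineAt c d j t ∧ c i ≠ c j

variable {c d}

lemma IsMaxLineAt.eq {i j : ι} {t : ℝ} (hi : IsMaxLineAt c d i t) (hj : IsMaxLineAt c d j t) :
    c i * t + d i = c j * t + d j :=
  le_antisymm (hj i) (hi j)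

lemma isMaxLineAt_neg_iff {i : ι} {t : ℝ} :
    IsMaxLineAt (-c) (-d) i t ↔ ∀ j, c i * t + d i ≤ c j * t + d j := by
  simp only [IsMaxLineAt, Pi.neg_apply, neg_mul, ← neg_add, neg_le_neg_iff]

lemma IsMaxLineAt.eventually [Finite ι] {i : ι} {t : ℝ} (hi : IsMaxLineAt c d i t)
    (ht : ¬ IsUpperKink c d t) : ∀ᶠ s in 𝓝 t, IsMaxLineAt c d i s := by
  refine eventually_all.2 fun j => ?_
  rcases (hi j).lt_or_eq with hlt | heq
  · exact (ContinuousAt.eventually_lt (by fun_prop) (by fun_prop) hlt).mono fun s hs => hs.le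
  · have hc : c j = c i := by_contra fun h => ht ⟨j, i, fun k => heq ▸ hi k, hi, h⟩
    have hd : d j = d i := by rw [hc] at heq; linarith
    exact Eventually.of_forall fun s => by rw [hc, hd]

variable (c d)

lemma isClosed_setOf_isMaxLineAt (i : ι) : IsClosed {t | IsMaxLineAt c d i t} := by
  simp only [IsMaxLineAt, ofPred_forall]
  exact isClosed_iInter fun j => isClosed_le (by fun_prop) (by fun_prop)

lemma finite_setOf_isUpperKink [Finite ι] : {t | IsUpperKink c d t}.Finite := by
  refine (Set.finite_range fun p : ι × ι => (d p.2 - d p.1) / (c p.1 - c p.2)).subset ?_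
  rintro t ⟨i, j, hi, hj, hij⟩
  refine ⟨(i, j), (div_eq_iff (sub_ne_zero.2 hij)).2 ?_⟩
  linear_combination hj.eq hi

noncomputable def upperKinks [Finite ι] : Finset ℝ := (finite_setOf_isUpperKink c d).toFinset

variable {c d} in
lemma mem_upperKinks [Finite ι] {t : ℝ} : t ∈ upperKinks c d ↔ IsUpperKink c d t :=
  Set.Finite.mem_toFinset _

/-- Kinks of the upper or of the lower envelope: negating the lines turns the lower envelope into
an upper one. -/
noncomputable def envelopeKinks [Finite ι] : Finset ℝ := upperKinks c d ∪ upperKinks (-c) (-d)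

theorem exists_forall_isMaxLineAt_Icc [Finite ι] [Nonempty ι] {u v : ℝ} (huv : u < v)
    (hk : ∀ t ∈ Ioo u v, ¬ IsUpperKink c d t) : ∃ i, ∀ t ∈ Icc u v, IsMaxLineAt c d i t := by
  obtain ⟨i, hi⟩ := Finite.exists_max fun i => c i * ((u + v) / 2) + d i
  have hZ := isClosed_setOf_isMaxLineAt c d i
  have hopen : ∀ t ∈ Ioo u v, IsMaxLineAt c d i t → t ∈ interior {s | IsMaxLineAt c d i s} :=
    fun t ht hit => mem_interior_iff_mem_nhds.2 (hit.eventually (hk t ht))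
  have hmid : (u + v) / 2 ∈ Ioo u v := ⟨by linarith, by linarith⟩
  have hIoo : Ioo u v ⊆ interior {s | IsMaxLineAt c d i s} :=
    isPreconnected_Ioo.subset_of_closure_inter_subset isOpen_interior
      ⟨_, hmid, hopen _ hmid hi⟩
      fun t ⟨htc, ht⟩ => hopen t ht (hZ.closure_subset_iff.2 interior_subset htc)
  refine ⟨i, fun t ht => ?_⟩
  rw [← closure_Ioo huv.ne] at ht
  exact hZ.closure_subset_iff.2 (hIoo.trans interior_subset) ht

theorem exists_affine_of_forall_notMem_envelopeKinks [Fintype ι]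
    (he : (univ : Finset ι).Nonempty) {u v : ℝ} (huv : u < v)
    (hk : ∀ t ∈ Ioo u v, t ∉ envelopeKinks c d) :
    ∃ p q : ℝ, ∀ t ∈ Icc u v, (univ.sup' he (fun i => c i * t + d i)
      + univ.inf' he (fun i => c i * t + d i)) / 2 = p * t + q := by
  have : Nonempty ι := he.to_type
  obtain ⟨i, hi⟩ := exists_forall_isMaxLineAt_Icc c d huv fun t ht hkt =>
    hk t ht (mem_union_left _ (mem_upperKinks.2 hkt))
  obtain ⟨j, hj⟩ := exists_forall_isMaxLineAt_Icc (-c) (-d) huv fun t ht hkt =>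
    hk t ht (mem_union_right _ (mem_upperKinks.2 hkt))
  refine ⟨(c i + c j) / 2, (d i + d j) / 2, fun t ht => ?_⟩
  have hsup : univ.sup' he (fun k => c k * t + d k) = c i * t + d i :=
    le_antisymm (sup'_le _ _ fun k _ => hi t ht k) (le_sup' (fun k => c k * t + d k) (mem_univ i))
  have hinf : univ.inf' he (fun k => c k * t + d k) = c j * t + d j :=
    le_antisymm (inf'_le _ (mem_univ j)) (le_inf' _ _ fun k _ => isMaxLineAt_neg_iff.1 (hj t ht) k)
  rw [hsup, hinf]
  ring

lemma exists_isMaxLineAt_forall_slope_le [Finite ι] [Nonempty ι] (t : ℝ) :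
    ∃ i, IsMaxLineAt c d i t ∧ ∀ j, IsMaxLineAt c d j t → c j ≤ c i := by
  obtain ⟨i₀, hi₀⟩ := Finite.exists_max fun i => c i * t + d i
  obtain ⟨i, hi, hmax⟩ :=
    Set.exists_max_image {i | IsMaxLineAt c d i t} c (Set.toFinite _) ⟨i₀, hi₀⟩
  exact ⟨i, hi, hmax⟩

noncomputable def steepestMaxLine [Finite ι] [Nonempty ι] (t : ℝ) : ι :=
  (exists_isMaxLineAt_forall_slope_le c d t).choose

section Steepest

variable [Finite ι] [Nonempty ι] {c d}

lemma isMaxLineAt_steepestMaxLine (t : ℝ) : IsMaxLineAt c d (steepestMaxLine c d t) t :=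
  (exists_isMaxLineAt_forall_slope_le c d t).choose_spec.1

lemma slope_le_steepestMaxLine {j : ι} {t : ℝ} (hj : IsMaxLineAt c d j t) :
    c j ≤ c (steepestMaxLine c d t) :=
  (exists_isMaxLineAt_forall_slope_le c d t).choose_spec.2 j hj

lemma IsUpperKink.exists_slope_lt_steepestMaxLine {t : ℝ} (ht : IsUpperKink c d t) :
    ∃ j, IsMaxLineAt c d j t ∧ c j < c (steepestMaxLine c d t) := by
  obtain ⟨i, j, hi, hj, hij⟩ := ht
  rcases hij.lt_or_gt with h | h
  · exact ⟨i, hi, h.trans_le (slope_le_steepestMaxLine hj)⟩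
  · exact ⟨j, hj, h.trans_le (slope_le_steepestMaxLine hi)⟩

lemma steepestMaxLine_ne_of_lt {t t' : ℝ} (ht' : IsUpperKink c d t') (htt' : t < t') :
    steepestMaxLine c d t ≠ steepestMaxLine c d t' := by
  intro h
  obtain ⟨j, hj, hji⟩ := ht'.exists_slope_lt_steepestMaxLine
  have hi := isMaxLineAt_steepestMaxLine (c := c) (d := d) t
  rw [h] at hi
  exact (line_lt_line_of_slope_lt_of_gt (hj.eq (isMaxLineAt_steepestMaxLine t')) hji htt').not_ge
    (hi j)

lemma injOn_steepestMaxLine : InjOn (steepestMaxLine c d) {t | IsUpperKink c d t} := by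
  intro t ht t' ht' h
  by_contra hne
  rcases lt_or_gt_of_ne hne with hlt | hlt
  · exact steepestMaxLine_ne_of_lt ht' hlt h
  · exact steepestMaxLine_ne_of_lt ht hlt h.symm

lemma steepestMaxLine_ne_steepestMaxLine_neg {t t' : ℝ} (ht : IsUpperKink c d t)
    (ht' : IsUpperKink (-c) (-d) t') : steepestMaxLine c d t ≠ steepestMaxLine (-c) (-d) t' := by
  intro h
  have hi := isMaxLineAt_steepestMaxLine (c := c) (d := d) t
  have hi' := isMaxLineAt_steepestMaxLine (c := -c) (d := -d) t'
  obtain ⟨j, hj, hji⟩ := ht.exists_slope_lt_steepestMaxLine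
  obtain ⟨k, hk, hki⟩ := ht'.exists_slope_lt_steepestMaxLine
  rw [← h] at hi' hki
  rcases lt_trichotomy t t' with hlt | rfl | hlt
  · exact (line_lt_line_of_slope_lt_of_lt (hj.eq hi) hji hlt).not_ge (isMaxLineAt_neg_iff.1 hi' j)
  · -- `i` attains both envelopes at `t`, so all lines meet there and `j` attains both as well
    have hj' : IsMaxLineAt (-c) (-d) j t := isMaxLineAt_neg_iff.2 fun l =>
      (hj.eq hi).trans_le (isMaxLineAt_neg_iff.1 hi' l)
    have := slope_le_steepestMaxLine hj'
    rw [← h, Pi.neg_apply, Pi.neg_apply, neg_le_neg_iff] at this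
    exact this.not_gt hji
  · refine (line_lt_line_of_slope_lt_of_lt (hk.eq hi') hki hlt).not_ge ?_
    simp only [Pi.neg_apply, neg_mul, ← neg_add, neg_le_neg_iff]
    exact hi k

end Steepest

theorem card_envelopeKinks_le [Fintype ι] [Nonempty ι] :
    #(envelopeKinks c d) ≤ Fintype.card ι := by
  classical
  have hinj (c d : ι → ℝ) : InjOn (steepestMaxLine c d) (upperKinks c d) := fun t ht t' ht' =>
    injOn_steepestMaxLine (mem_upperKinks.1 ht) (mem_upperKinks.1 ht')
  have hdisj : Disjoint ((upperKinks c d).image (steepestMaxLine c d))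
      ((upperKinks (-c) (-d)).image (steepestMaxLine (-c) (-d))) := by
    refine Finset.disjoint_left.2 fun i hi hi' => ?_
    obtain ⟨t, ht, rfl⟩ := Finset.mem_image.1 hi
    obtain ⟨t', ht', h⟩ := Finset.mem_image.1 hi'
    exact steepestMaxLine_ne_steepestMaxLine_neg (mem_upperKinks.1 ht) (mem_upperKinks.1 ht') h.symm
  calc #(envelopeKinks c d)
      ≤ #(upperKinks c d) + #(upperKinks (-c) (-d)) := Finset.card_union_le _ _
    _ = #((upperKinks c d).image (steepestMaxLine c d) ∪
          (upperKinks (-c) (-d)).image (steepestMaxLine (-c) (-d))) := by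
        rw [card_union_of_disjoint hdisj, card_image_of_injOn (hinj c d),
          card_image_of_injOn (hinj (-c) (-d))]
    _ ≤ Fintype.card ι := card_le_univ _

end Lines

theorem stmt7_general (n τ : ℕ) (hn : 1 ≤ n) (hτ : 1 ≤ τ)
    (ts : Fin (τ + 1) → ℝ) (hts : StrictMono ts)
    (σ : Fin n → ℝ → ℝ)
    (hσaff : ∀ (i : Fin n) (j : Fin τ), ∃ c d : ℝ,
      ∀ t ∈ Set.Icc (ts j.castSucc) (ts j.succ), σ i t = c * t + d)
    (I : ℝ → ℝ)
    (hI : ∀ t, I t = (Finset.univ.sup' ⟨⟨0, hn⟩, Finset.mem_univ _⟩ (fun i => σ i t)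
        + Finset.univ.inf' ⟨⟨0, hn⟩, Finset.mem_univ _⟩ (fun i => σ i t)) / 2) :
    ∃ K : ℕ, K ≤ τ * (n + 2) ∧
      ∃ s : Fin (K + 1) → ℝ, StrictMono s ∧ s 0 = ts 0 ∧ s (Fin.last K) = ts (Fin.last τ) ∧
        ∀ k : Fin K, ∃ c d : ℝ,
          ∀ t ∈ Set.Icc (s k.castSucc) (s k.succ), I t = c * t + d := by
  have : Nonempty (Fin n) := ⟨⟨0, hn⟩⟩
  choose c d hcd using hσaff
  set U := (Finset.Ioo 0 (Fin.last τ)).image ts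
  set V := univ.biUnion fun j => envelopeKinks (c · j) (d · j)
  have hU : #U ≤ τ - 1 := card_image_le.trans (by simp)
  have hV : #V ≤ τ * n :=
    (card_biUnion_le.trans (sum_le_sum fun j _ => card_envelopeKinks_le _ _)).trans (by simp)
  have hends : ts 0 < ts (Fin.last τ) := hts (by rw [Fin.lt_def, Fin.val_zero, Fin.val_last]; omega)
  obtain ⟨K, hK, hpieces⟩ := exists_hasAffinePieces_of_finset (f := I) (U ∪ V) hends
    fun u v hu huv hv hgap => by
    obtain ⟨j, hju, hjv⟩ := exists_segment_of_forall_notMem_Ioo ts hu huv hv fun k hk =>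
      hgap _ (mem_union_left _ (mem_image_of_mem ts hk))
    obtain ⟨p, q, hpq⟩ := exists_affine_of_forall_notMem_envelopeKinks (c · j) (d · j)
      ⟨⟨0, hn⟩, mem_univ _⟩ huv fun t ht hmem =>
        hgap t (mem_union_right _ (mem_biUnion.2 ⟨j, mem_univ _, hmem⟩)) ht
    refine ⟨p, q, fun t ht => ?_⟩
    have hσ (i : Fin n) : σ i t = c i j * t + d i j := hcd i j t ⟨hju.trans ht.1, ht.2.trans hjv⟩
    rw [hI t, ← hpq t ht]
    simp only [hσ]
  refine ⟨K, ?_, hpieces⟩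
  have := Finset.card_union_le U V
  have : τ * (n + 2) = τ * n + 2 * τ := by ring
  omega

/-- Lemma 1 of the paper: the ideal trajectory of `n` piecewise-linear trajectories in ℝ¹
with breakpoints `t_0 < … < t_τ` is piecewise affine with at most `τ(n + 2)` pieces. -/
theorem stmt7 (n τ : ℕ) (hn : 1 ≤ n) (hτ : 1 ≤ τ)
    (ts : Fin (τ + 1) → ℝ) (hts : StrictMono ts)
    (σ : Fin n → ℝ → ℝ) (hσc : ∀ i, Continuous (σ i))
    (hσaff : ∀ (i : Fin n) (j : Fin τ), ∃ c d : ℝ,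
      ∀ t ∈ Set.Icc (ts j.castSucc) (ts j.succ), σ i t = c * t + d)
    (I : ℝ → ℝ)
    (hI : ∀ t, I t = (Finset.univ.sup' ⟨⟨0, hn⟩, Finset.mem_univ _⟩ (fun i => σ i t)
        + Finset.univ.inf' ⟨⟨0, hn⟩, Finset.mem_univ _⟩ (fun i => σ i t)) / 2) :
    ∃ K : ℕ, K ≤ τ * (n + 2) ∧
      ∃ s : Fin (K + 1) → ℝ, StrictMono s ∧ s 0 = ts 0 ∧ s (Fin.last K) = ts (Fin.last τ) ∧
        ∀ k : Fin K, ∃ c d : ℝ,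
          ∀ t ∈ Set.Icc (s k.castSucc) (s k.succ), I t = c * t + d :=
  stmt7_general n τ hn hτ ts hts σ hσaff I hI
end

section
/- Let d ≥ 1 and let f_1, g_1, f_2, g_2 : ℝ → ℝ^d (with the Euclidean metric) be affine ma设ps. Define h_1(t) = dist(f_1(t), g_1(t)) and h_2(t) = dist(f_2(t), g_2(t)). If h_1 and h_2 are not equal as functions on ℝ, then the set {t ∈ ℝ : h_1(t) = h_2(t)} has at most 2 elements. -/
/-!
The squared distance between two points moving affinely is a polynomial of degree at most two
in time. Two distance functions agree exactly where their squares do, so the times at which they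
agree are roots of the difference of two such polynomials, which vanishes identically only if the
distance functions coincide.
-/

open Polynomial

theorem Polynomial.encard_setOf_eval_eq_zero_le {R : Type*} [CommRing R] [IsDomain R]
    {P : R[X]} (hP : P ≠ 0) : {t | P.eval t = 0}.encard ≤ P.natDegree := by
  classical
  have hroots : {t | P.eval t = 0} = (P.roots.toFinset : Set R) := by
    ext t
    simp [mem_roots hP]
  rw [hroots, Set.encard_coe_eq_coe_finsetCard, Nat.cast_le]
  exact (Multiset.toFinset_card_le _).trans (card_roots' P)

section InnerProductSpace

variable {E : Type*} [NormedAddCommGroup E] [InnerProductSpace ℝ E]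

theorem norm_add_smul_sq (a b : E) (t : ℝ) :
    ‖a + t • b‖ ^ 2 = ‖a‖ ^ 2 + 2 * inner ℝ a b * t + ‖b‖ ^ 2 * t ^ 2 := by
  rw [norm_add_sq_real, real_inner_smul_right, norm_smul, mul_pow, Real.norm_eq_abs, sq_abs]
  ring

theorem exists_natDegree_le_two_eval_eq_dist_add_smul_sq (p v q w : E) :
    ∃ P : ℝ[X], P.natDegree ≤ 2 ∧ ∀ t, P.eval t = dist (p + t • v) (q + t • w) ^ 2 := by
  refine ⟨C (‖p - q‖ ^ 2) + C (2 * inner ℝ (p - q) (v - w)) * X + C (‖v - w‖ ^ 2) * X ^ 2,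
    by compute_degree, fun t => ?_⟩
  have hdiff : p + t • v - (q + t • w) = (p - q) + t • (v - w) := by
    rw [smul_sub]; abel
  rw [dist_eq_norm, hdiff, norm_add_smul_sq]
  simp only [eval_add, eval_mul, eval_C, eval_X, eval_pow]

end InnerProductSpace

theorem encard_setOf_eq_le_two_of_sq_eq_eval {h₁ h₂ : ℝ → ℝ} {P₁ P₂ : ℝ[X]}
    (h₁_nonneg : ∀ t, 0 ≤ h₁ t) (h₂_nonneg : ∀ t, 0 ≤ h₂ t)
    (hP₁ : P₁.natDegree ≤ 2) (hP₂ : P₂.natDegree ≤ 2)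
    (hP₁h₁ : ∀ t, P₁.eval t = h₁ t ^ 2) (hP₂h₂ : ∀ t, P₂.eval t = h₂ t ^ 2) (hne : h₁ ≠ h₂) :
    {t | h₁ t = h₂ t}.encard ≤ 2 := by
  have heval : ∀ t, (P₁ - P₂).eval t = 0 ↔ h₁ t = h₂ t := fun t => by
    rw [eval_sub, hP₁h₁, hP₂h₂, sub_eq_zero, sq_eq_sq₀ (h₁_nonneg t) (h₂_nonneg t)]
  have hsub_ne : P₁ - P₂ ≠ 0 := fun h0 =>
    hne (funext fun t => (heval t).1 (by rw [h0, eval_zero]))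
  calc {t | h₁ t = h₂ t}.encard = {t | (P₁ - P₂).eval t = 0}.encard := by simp only [heval]
    _ ≤ (P₁ - P₂).natDegree := encard_setOf_eval_eq_zero_le hsub_ne
    _ ≤ 2 := by exact_mod_cast (natDegree_sub_le P₁ P₂).trans (max_le hP₁ hP₂)

theorem stmt9_general (d : ℕ)
    (f₁ g₁ f₂ g₂ : ℝ → EuclideanSpace ℝ (Fin d))
    (p₁ v₁ q₁ w₁ p₂ v₂ q₂ w₂ : EuclideanSpace ℝ (Fin d))
    (hf₁ : ∀ t : ℝ, f₁ t = p₁ + t • v₁) (hg₁ : ∀ t : ℝ, g₁ t = q₁ + t • w₁)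
    (hf₂ : ∀ t : ℝ, f₂ t = p₂ + t • v₂) (hg₂ : ∀ t : ℝ, g₂ t = q₂ + t • w₂)
    (hne : (fun t => dist (f₁ t) (g₁ t)) ≠ (fun t => dist (f₂ t) (g₂ t))) :
    {t : ℝ | dist (f₁ t) (g₁ t) = dist (f₂ t) (g₂ t)}.encard ≤ 2 := by
  obtain ⟨P₁, hP₁, hP₁_eval⟩ := exists_natDegree_le_two_eval_eq_dist_add_smul_sq p₁ v₁ q₁ w₁
  obtain ⟨P₂, hP₂, hP₂_eval⟩ := exists_natDegree_le_two_eval_eq_dist_add_smul_sq p₂ v₂ q₂ w₂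
  refine encard_setOf_eq_le_two_of_sq_eq_eval (fun _ => dist_nonneg) (fun _ => dist_nonneg)
    hP₁ hP₂ (fun t => ?_) (fun t => ?_) hne
  · rw [hf₁, hg₁, hP₁_eval]
  · rw [hf₂, hg₂, hP₂_eval]

/-- Two distance functions between affinely moving entities in ℝ^d either coincide
identically or agree at no more than 2 times. -/
theorem stmt9 (d : ℕ) (hd : 1 ≤ d)
    (f₁ g₁ f₂ g₂ : ℝ → EuclideanSpace ℝ (Fin d))
    (p₁ v₁ q₁ w₁ p₂ v₂ q₂ w₂ : EuclideanSpace ℝ (Fin d))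
    (hf₁ : ∀ t : ℝ, f₁ t = p₁ + t • v₁) (hg₁ : ∀ t : ℝ, g₁ t = q₁ + t • w₁)
    (hf₂ : ∀ t : ℝ, f₂ t = p₂ + t • v₂) (hg₂ : ∀ t : ℝ, g₂ t = q₂ + t • w₂)
    (hne : (fun t => dist (f₁ t) (g₁ t)) ≠ (fun t => dist (f₂ t) (g₂ t))) :
    {t : ℝ | dist (f₁ t) (g₁ t) = dist (f₂ t) (g₂ t)}.encard ≤ 2 :=
  stmt9_general d f₁ g₁ f₂ g₂ p₁ v₁ q₁ w₁ p₂ v₂ q₂ w₂ hf₁ hg₁ hf₂ hg₂ hne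
end

section
/- Let n ≥ 1, let a < b be reals, and let f_1, …, f_n : ℝ → ℝ be continuous functions such that for all i ≠ j the set {t ∈ [a,b] : f_i(t) = f_j(t)} has at most 2 elements. Then there exist k ≤ 2n − 1, a partition a = s_0 < s_1 < … < s_k = b, and indices i_1, …, i_k such that for each j ∈ {1,…,k} and every t ∈ [s_{j−1}, s_j], max_{1≤i≤n} f_i(t) = f_{i_j}(t). -/
/-! Cut `[a, b]` at the finitely many points where two of the functions meet. On each piece no
two functions meet in the interior, so by the intermediate value theorem the function on top at
one interior point is on top on the whole piece. Merging adjacent pieces with the same top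
function leaves a sequence of owners without immediate repetitions. It contains no alternation
`i … j … i … j`: each owner is strictly on top somewhere inside its piece (equality on a whole
piece would be infinitely many meetings), so `f i - f j` would change sign three times.

A sequence over `n` letters with these two properties has at most `2n - 1` terms: at most `n`
terms are first occurrences, and if the term at position `j` is not a first occurrence, then
position `j - 1` is the last occurrence of its letter, which therefore differs from the final
letter; so at most `n - 1` terms are repetitions. -/

open Set

section DavenportSchinzel

variable {α : Type*} {m : ℕ} {c : ℕ → α}

structure IsDavenportSchinzel₂ (m : ℕ) (c : ℕ → α) : Prop where
  ne_succ : ∀ j, j + 1 < m → c j ≠ c (j + 1)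
  eq_of_alternating : ∀ p₁ p₂ p₃ p₄, p₁ < p₂ → p₂ < p₃ → p₃ < p₄ → p₄ < m →
    c p₁ = c p₃ → c p₂ = c p₄ → c p₁ = c p₂

theorem IsDavenportSchinzel₂.apply_ne_apply_pred_of_repeat (h : IsDavenportSchinzel₂ m c)
    {j : ℕ} (hjm : j < m) (hrep : ¬ ∀ p < j, c p ≠ c j) {q : ℕ} (hjq : j - 1 < q) (hqm : q < m) :
    c q ≠ c (j - 1) := by
  push Not at hrep
  obtain ⟨p, hpj, hcp⟩ := hrep
  obtain ⟨i, rfl⟩ : ∃ i, j = i + 1 := ⟨j - 1, by omega⟩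
  rw [Nat.add_sub_cancel] at hjq ⊢
  intro hcq
  have hne := h.ne_succ i hjm
  have hpi : p < i := lt_of_le_of_ne (Nat.lt_succ_iff.mp hpj) (by rintro rfl; exact hne hcp)
  have hiq : i + 1 < q := lt_of_le_of_ne hjq (by rintro rfl; exact hne hcq.symm)
  exact hne ((h.eq_of_alternating p i (i + 1) q hpi i.lt_succ_self hiq hqm hcp hcq.symm).symm.trans
    hcp)

variable [Fintype α] [DecidableEq α]

theorem card_filter_first_occurrence_le (m : ℕ) (c : ℕ → α) :
    ((Finset.range m).filter fun j => ∀ p < j, c p ≠ c j).card ≤ Fintype.card α := by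
  refine Finset.card_le_card_of_injOn c (fun _ _ => Finset.mem_univ _) fun j hj j' hj' hcc => ?_
  simp only [Finset.coe_filter, Finset.mem_range, mem_ofPred_eq] at hj hj'
  rcases lt_trichotomy j j' with h | h | h
  · exact absurd hcc (hj'.2 j h)
  · exact h
  · exact absurd hcc.symm (hj.2 j' h)

theorem IsDavenportSchinzel₂.card_filter_repeat_le (h : IsDavenportSchinzel₂ m c) :
    ((Finset.range m).filter fun j => ¬ ∀ p < j, c p ≠ c j).card ≤ Fintype.card α - 1 := by
  set R := (Finset.range m).filter fun j => ¬ ∀ p < j, c p ≠ c j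
  have hR : ∀ j ∈ R, 0 < j ∧ j < m ∧ ∀ q, j - 1 < q → q < m → c q ≠ c (j - 1) := fun j hj => by
    obtain ⟨hjm, hrep⟩ := Finset.mem_filter.1 hj
    rw [Finset.mem_range] at hjm
    refine ⟨Nat.pos_of_ne_zero ?_, hjm, fun q => h.apply_ne_apply_pred_of_repeat hjm hrep⟩
    rintro rfl
    simp at hrep
  calc R.card ≤ (Finset.univ.erase (c (m - 1))).card := by
        refine Finset.card_le_card_of_injOn (fun j => c (j - 1)) (fun j hj => ?_)
          fun j hj j' hj' hcc => ?_
        · obtain ⟨hj0, hjm, hlast⟩ := hR j hj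
          exact Finset.mem_erase.2 ⟨(hlast _ (by omega) (by omega)).symm, Finset.mem_univ _⟩
        · obtain ⟨hj0, hjm, hlast⟩ := hR j hj
          obtain ⟨hj0', hjm', hlast'⟩ := hR j' hj'
          rcases lt_trichotomy j j' with hlt | heq | hlt
          · exact absurd hcc.symm (hlast _ (by omega) (by omega))
          · exact heq
          · exact absurd hcc (hlast' _ (by omega) (by omega))
    _ = Fintype.card α - 1 := by rw [Finset.card_erase_of_mem (Finset.mem_univ _), Finset.card_univ]

theorem IsDavenportSchinzel₂.le_two_mul_card_sub_one (h : IsDavenportSchinzel₂ m c) :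
    m ≤ 2 * Fintype.card α - 1 := by
  have hsplit := Finset.card_filter_add_card_filter_not (s := Finset.range m)
    (fun j => ∀ p < j, c p ≠ c j)
  have hfirst := card_filter_first_occurrence_le m c
  have hrep := h.card_filter_repeat_le
  rw [Finset.card_range] at hsplit
  omega

end DavenportSchinzel

theorem monotoneOn_Iic_of_lt_succ {β : Type*} [Preorder β] {t : ℕ → β} {m : ℕ}
    (ht : ∀ j < m, t j < t (j + 1)) : MonotoneOn t (Iic m) :=
  (strictMonoOn_Iic_of_lt_succ ht).monotoneOn

theorem Icc_subset_Icc_of_lt_succ {t : ℕ → ℝ} {m j : ℕ} (ht : ∀ j < m, t j < t (j + 1))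
    (hj : j < m) : Icc (t j) (t (j + 1)) ⊆ Icc (t 0) (t m) :=
  Icc_subset_Icc (monotoneOn_Iic_of_lt_succ ht (by simp) (by simp; omega) (Nat.zero_le j))
    (monotoneOn_Iic_of_lt_succ ht (by simp; omega) (by simp) hj)

theorem exists_partition_avoiding {s : Set ℝ} (hs : s.Finite) {a b : ℝ} (hab : a < b) :
    ∃ (m : ℕ) (t : ℕ → ℝ), 1 ≤ m ∧ (∀ j < m, t j < t (j + 1)) ∧ t 0 = a ∧ t m = b ∧
      ∀ j < m, ∀ x ∈ Ioo (t j) (t (j + 1)), x ∉ s := by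
  classical
  set u : Finset ℝ := (insert a (insert b hs.toFinset)).filter (· ∈ Icc a b)
  have hau : a ∈ u := by simp [u, hab.le]
  have hbu : b ∈ u := by simp [u, hab.le]
  have hu : ∀ x ∈ u, x ∈ Icc a b := fun x hx => (Finset.mem_filter.1 hx).2
  have hcard : 2 ≤ u.card :=
    calc 2 = ({a, b} : Finset ℝ).card := (Finset.card_pair hab.ne).symm
      _ ≤ u.card := Finset.card_le_card (by simp [Finset.insert_subset_iff, hau, hbu])
  obtain ⟨m, hm⟩ : ∃ m, u.card = m + 1 := ⟨u.card - 1, by omega⟩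
  set e := u.orderEmbOfFin hm
  have hrange : ∀ x ∈ u, ∃ l, e l = x := fun x hx => by
    rwa [← Set.mem_range, Finset.range_orderEmbOfFin]
  have hIcc : ∀ l, e l ∈ Icc a b := fun l => hu _ (Finset.orderEmbOfFin_mem u hm l)
  set t : ℕ → ℝ := fun j => e (Fin.clamp j m)
  have ht : ∀ {j} (hj : j ≤ m), t j = e ⟨j, Nat.lt_succ_of_le hj⟩ := fun hj => by
    simp only [t]; congr 1; ext; simp [Fin.clamp, hj]
  refine ⟨m, t, by omega, fun j hj => ?_, ?_, ?_, fun j hj x hx hxs => ?_⟩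
  · rw [ht hj.le, ht (Nat.succ_le_of_lt hj)]
    exact e.strictMono (Fin.mk_lt_mk.2 j.lt_succ_self)
  · obtain ⟨l, hl⟩ := hrange a hau
    refine le_antisymm ?_ (hIcc _).1
    rw [← hl, ht (Nat.zero_le m)]
    exact e.monotone (Fin.zero_le _)
  · obtain ⟨l, hl⟩ := hrange b hbu
    refine le_antisymm (hIcc _).2 ?_
    rw [← hl, ht le_rfl]
    exact e.monotone (Fin.le_last l)
  · rw [ht hj.le, ht (Nat.succ_le_of_lt hj)] at hx
    obtain ⟨l, rfl⟩ := hrange x (Finset.mem_filter.2 ⟨by simp [hxs],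
      (hIcc _).1.trans hx.1.le, hx.2.le.trans (hIcc _).2⟩)
    have h₁ : j < l.val := e.lt_iff_lt.1 hx.1
    have h₂ : l.val < j + 1 := e.lt_iff_lt.1 hx.2
    omega

theorem exists_mem_Ioo_eq_of_lt_of_lt {g h : ℝ → ℝ} (hg : Continuous g) (hh : Continuous h)
    {x y : ℝ} (hxy : x < y) (hx : h x < g x) (hy : g y < h y) : ∃ z ∈ Ioo x y, g z = h z := by
  obtain ⟨z, hz, hhz⟩ := isPreconnected_Icc.intermediate_value₂ (left_mem_Icc.2 hxy.le)
    (right_mem_Icc.2 hxy.le) hh.continuousOn hg.continuousOn hx.le hy.le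
  refine ⟨z, ⟨lt_of_le_of_ne hz.1 ?_, lt_of_le_of_ne hz.2 ?_⟩, hhz.symm⟩ <;>
    rintro rfl <;> linarith

theorem three_le_encard_setOf_eq {g h : ℝ → ℝ} (hg : Continuous g) (hh : Continuous h)
    {x₁ x₂ x₃ x₄ : ℝ} (h₁₂ : x₁ < x₂) (h₂₃ : x₂ < x₃) (h₃₄ : x₃ < x₄) (h₁ : h x₁ < g x₁)
    (h₂ : g x₂ < h x₂) (h₃ : h x₃ < g x₃) (h₄ : g x₄ < h x₄) :
    3 ≤ {x ∈ Icc x₁ x₄ | g x = h x}.encard := by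
  obtain ⟨z₁, hz₁, hgz₁⟩ := exists_mem_Ioo_eq_of_lt_of_lt hg hh h₁₂ h₁ h₂
  obtain ⟨z₂, hz₂, hgz₂⟩ := exists_mem_Ioo_eq_of_lt_of_lt hh hg h₂₃ h₂ h₃
  obtain ⟨z₃, hz₃, hgz₃⟩ := exists_mem_Ioo_eq_of_lt_of_lt hg hh h₃₄ h₃ h₄
  have hsub : {z₁, z₂, z₃} ⊆ {x ∈ Icc x₁ x₄ | g x = h x} := by
    rintro z (rfl | rfl | rfl)
    · exact ⟨⟨hz₁.1.le, by linarith [hz₁.2]⟩, hgz₁⟩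
    · exact ⟨⟨by linarith [hz₂.1], by linarith [hz₂.2]⟩, hgz₂.symm⟩
    · exact ⟨⟨by linarith [hz₃.1], hz₃.2.le⟩, hgz₃⟩
  have h₃ : ({z₁, z₂, z₃} : Set ℝ).encard = 3 := Set.encard_eq_three.2
    ⟨z₁, z₂, z₃, by linarith [hz₁.2, hz₂.1], by linarith [hz₁.2, hz₃.1], by linarith [hz₂.2, hz₃.1],
      rfl⟩
  exact h₃ ▸ Set.encard_mono hsub

theorem exists_forall_le_of_forall_ne {ι : Type*} [Finite ι] [Nonempty ι] {f : ι → ℝ → ℝ}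
    (hf : ∀ i, Continuous (f i)) {u v : ℝ} (huv : u < v)
    (hne : ∀ i j, i ≠ j → ∀ x ∈ Ioo u v, f i x ≠ f j x) :
    ∃ i₀, ∀ x ∈ Icc u v, ∀ i, f i x ≤ f i₀ x := by
  have hmid : (u + v) / 2 ∈ Ioo u v := ⟨by linarith, by linarith⟩
  obtain ⟨i₀, hi₀⟩ := Finite.exists_max fun i => f i ((u + v) / 2)
  refine ⟨i₀, fun x hx i => ?_⟩
  have hIoo : ∀ y ∈ Ioo u v, f i y ≤ f i₀ y := fun y hy => by
    by_contra! hlt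
    obtain ⟨z, hz, hfz⟩ := isPreconnected_Ioo.intermediate_value₂ hy hmid (hf i₀).continuousOn
      (hf i).continuousOn hlt.le (hi₀ i)
    exact hne i₀ i (by rintro rfl; exact lt_irrefl _ hlt) z hz hfz
  rw [← closure_Ioo huv.ne] at hx
  exact (isClosed_le (hf i) (hf i₀)).closure_subset_iff.2 hIoo hx

section EnvelopePartition

variable {ι : Type*} {f : ι → ℝ → ℝ} {m : ℕ} {t : ℕ → ℝ} {c : ℕ → ι}

structure IsEnvelopePartition (f : ι → ℝ → ℝ) (m : ℕ) (t : ℕ → ℝ) (c : ℕ → ι) : Prop where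
  lt_succ : ∀ j < m, t j < t (j + 1)
  le_apply : ∀ j < m, ∀ x ∈ Icc (t j) (t (j + 1)), ∀ i, f i x ≤ f (c j) x

theorem exists_isEnvelopePartition [Finite ι] [Nonempty ι] (hf : ∀ i, Continuous (f i))
    {a b : ℝ} (hab : a < b) (hfin : ∀ i j, i ≠ j → {x ∈ Icc a b | f i x = f j x}.Finite) :
    ∃ m t c, 1 ≤ m ∧ IsEnvelopePartition f m t c ∧ t 0 = a ∧ t m = b := by
  have hcross : {x ∈ Icc a b | ∃ i j, i ≠ j ∧ f i x = f j x}.Finite :=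
    (Set.finite_iUnion fun p : {p : ι × ι // p.1 ≠ p.2} => hfin _ _ p.2).subset
      fun x ⟨hx, i, j, hij, hfx⟩ => mem_iUnion.2 ⟨⟨(i, j), hij⟩, hx, hfx⟩
  obtain ⟨m, t, hm, ht, ht0, htm, hgap⟩ := exists_partition_avoiding hcross hab
  have hown : ∀ j < m, ∃ i₀, ∀ x ∈ Icc (t j) (t (j + 1)), ∀ i, f i x ≤ f i₀ x := fun j hj =>
    exists_forall_le_of_forall_ne hf (ht j hj) fun i k hik x hx hfx => hgap j hj x hx
      ⟨ht0 ▸ htm ▸ Icc_subset_Icc_of_lt_succ ht hj (Ioo_subset_Icc_self hx), i, k, hik, hfx⟩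
  choose! c hc using hown
  exact ⟨m, t, c, hm, ⟨ht, hc⟩, ht0, htm⟩

theorem IsEnvelopePartition.merge (h : IsEnvelopePartition f m t c) {j : ℕ} (hj : j + 1 < m)
    (hc : c j = c (j + 1)) :
    IsEnvelopePartition f (m - 1) (fun l => t (if l ≤ j then l else l + 1))
      (fun l => c (if l ≤ j then l else l + 1)) where
  lt_succ l hl := by
    split_ifs with h₁ h₂ h₂
    · exact h.lt_succ l (by omega)
    · obtain rfl : l = j := by omega
      exact (h.lt_succ l (by omega)).trans (h.lt_succ (l + 1) hj)
    · omega
    · exact h.lt_succ (l + 1) (by omega)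
  le_apply l hl x hx i := by
    split_ifs at hx ⊢ with h₁ h₂ h₂
    · exact h.le_apply l (by omega) x hx i
    · obtain rfl : l = j := by omega
      rcases le_total x (t (l + 1)) with hx' | hx'
      · exact h.le_apply l (by omega) x ⟨hx.1, hx'⟩ i
      · exact hc ▸ h.le_apply (l + 1) hj x ⟨hx', hx.2⟩ i
    · omega
    · exact h.le_apply (l + 1) (by omega) x hx i

theorem IsEnvelopePartition.exists_ne_succ (h : IsEnvelopePartition f m t c) (hm : 1 ≤ m) :
    ∃ m' t' c', 1 ≤ m' ∧ IsEnvelopePartition f m' t' c' ∧ t' 0 = t 0 ∧ t' m' = t m ∧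
      ∀ j, j + 1 < m' → c' j ≠ c' (j + 1) := by
  induction m using Nat.strong_induction_on generalizing t c with
  | _ m ih =>
  by_cases hrep : ∃ j, j + 1 < m ∧ c j = c (j + 1)
  · obtain ⟨j, hj, hcj⟩ := hrep
    obtain ⟨m', t', c', hm', h', ht0, htm, hne⟩ := ih (m - 1) (by omega) (h.merge hj hcj) (by omega)
    refine ⟨m', t', c', hm', h', ht0, htm.trans ?_, hne⟩
    simp [show ¬m - 1 ≤ j by omega, show m - 1 + 1 = m by omega]
  · push Not at hrep
    exact ⟨m, t, c, hm, h, rfl, rfl, hrep⟩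

theorem IsEnvelopePartition.exists_lt_apply (h : IsEnvelopePartition f m t c) {p : ℕ} (hp : p < m)
    {w : ι} (hfin : {x ∈ Icc (t 0) (t m) | f w x = f (c p) x}.Finite) :
    ∃ x ∈ Ioo (t p) (t (p + 1)), f w x < f (c p) x := by
  by_contra! hle
  refine Set.Ioo_infinite (h.lt_succ p hp) (hfin.subset fun x hx => ?_)
  have hx' := Ioo_subset_Icc_self hx
  exact ⟨Icc_subset_Icc_of_lt_succ h.lt_succ hp hx', (h.le_apply p hp x hx' w).antisymm (hle x hx)⟩

theorem IsEnvelopePartition.isDavenportSchinzel₂ (h : IsEnvelopePartition f m t c)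
    (hf : ∀ i, Continuous (f i))
    (hpair : ∀ i j, i ≠ j → {x ∈ Icc (t 0) (t m) | f i x = f j x}.encard ≤ 2)
    (hne : ∀ j, j + 1 < m → c j ≠ c (j + 1)) : IsDavenportSchinzel₂ m c := by
  refine ⟨hne, fun p₁ p₂ p₃ p₄ h₁₂ h₂₃ h₃₄ h₄ hc₁₃ hc₂₄ => ?_⟩
  by_contra hc₁₂
  have hfin : ∀ i j, i ≠ j → {x ∈ Icc (t 0) (t m) | f i x = f j x}.Finite := fun i j hij =>
    Set.finite_of_encard_le_coe (hpair i j hij)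
  obtain ⟨x₁, hx₁, hlt₁⟩ := h.exists_lt_apply (w := c p₂) (by omega) (hfin _ _ (Ne.symm hc₁₂))
  obtain ⟨x₂, hx₂, hlt₂⟩ := h.exists_lt_apply (w := c p₁) (by omega) (hfin _ _ hc₁₂)
  obtain ⟨x₃, hx₃, hlt₃⟩ := h.exists_lt_apply (w := c p₂) (by omega)
    (hc₁₃ ▸ hfin _ _ (Ne.symm hc₁₂))
  obtain ⟨x₄, hx₄, hlt₄⟩ := h.exists_lt_apply (w := c p₁) h₄ (hc₂₄ ▸ hfin _ _ hc₁₂)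
  rw [← hc₁₃] at hlt₃
  rw [← hc₂₄] at hlt₄
  have hlt : ∀ {p q x y}, p < q → q < m → x ∈ Ioo (t p) (t (p + 1)) →
      y ∈ Ioo (t q) (t (q + 1)) → x < y := fun hpq hqm hx hy =>
    hx.2.trans <| (monotoneOn_Iic_of_lt_succ h.lt_succ (by simp; omega) (by simp; omega)
      hpq).trans_lt hy.1
  have hsub : {x ∈ Icc x₁ x₄ | f (c p₁) x = f (c p₂) x} ⊆
      {x ∈ Icc (t 0) (t m) | f (c p₁) x = f (c p₂) x} := fun x hx =>
    ⟨⟨(Icc_subset_Icc_of_lt_succ h.lt_succ (by omega) (Ioo_subset_Icc_self hx₁)).1.trans hx.1.1,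
      hx.1.2.trans (Icc_subset_Icc_of_lt_succ h.lt_succ h₄ (Ioo_subset_Icc_self hx₄)).2⟩, hx.2⟩
  have h₃ := three_le_encard_setOf_eq (hf (c p₁)) (hf (c p₂)) (hlt h₁₂ (by omega) hx₁ hx₂)
    (hlt h₂₃ (by omega) hx₂ hx₃) (hlt h₃₄ h₄ hx₃ hx₄) hlt₁ hlt₂ hlt₃ hlt₄
  have := (h₃.trans (Set.encard_mono hsub)).trans (hpair _ _ hc₁₂)
  norm_num at this

theorem IsEnvelopePartition.sup'_eq [Fintype ι] (h : IsEnvelopePartition f m t c)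
    (H : (Finset.univ : Finset ι).Nonempty) {j : ℕ} (hj : j < m) {x : ℝ}
    (hx : x ∈ Icc (t j) (t (j + 1))) : Finset.univ.sup' H (f · x) = f (c j) x :=
  (Finset.sup'_le _ _ fun i _ => h.le_apply j hj x hx i).antisymm
    (Finset.le_sup' (f · x) (Finset.mem_univ _))

end EnvelopePartition

/-- The upper envelope of `n` continuous functions on `[a,b]` that pairwise intersect at
most twice consists of at most `2n − 1` pieces, each attained by a single function. -/
theorem stmt10 (n : ℕ) (hn : 1 ≤ n) (a b : ℝ) (hab : a < b)
    (f : Fin n → ℝ → ℝ) (hfc : ∀ i, Continuous (f i))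
    (hpair : ∀ i j : Fin n, i ≠ j →
      {t ∈ Set.Icc a b | f i t = f j t}.encard ≤ 2) :
    ∃ k : ℕ, 1 ≤ k ∧ k ≤ 2 * n - 1 ∧
      ∃ s : Fin (k + 1) → ℝ, StrictMono s ∧ s 0 = a ∧ s (Fin.last k) = b ∧
        ∃ idx : Fin k → Fin n, ∀ j : Fin k,
          ∀ t ∈ Set.Icc (s j.castSucc) (s j.succ),
            Finset.univ.sup' ⟨⟨0, hn⟩, Finset.mem_univ _⟩ (fun i => f i t) = f (idx j) t := by
  have : Nonempty (Fin n) := ⟨⟨0, hn⟩⟩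
  obtain ⟨m₀, t₀, c₀, hm₀, hP₀, rfl, rfl⟩ := exists_isEnvelopePartition hfc hab
    fun i j hij => Set.finite_of_encard_le_coe (hpair i j hij)
  obtain ⟨m, t, c, hm, hP, ht0, htm, hne⟩ := hP₀.exists_ne_succ hm₀
  have hDS := hP.isDavenportSchinzel₂ hfc (by rwa [ht0, htm]) hne
  refine ⟨m, hm, by simpa using hDS.le_two_mul_card_sub_one, fun j => t j,
    Fin.strictMono_iff_lt_succ.2 fun j => hP.lt_succ j j.isLt, ht0, htm, fun j => c j,
    fun j x hx => hP.sup'_eq _ j.isLt hx⟩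
end

section
/- Let d, n ≥ 1, τ ≥ 1, let t_0 < t_1 < … < t_τ be reals, and let σ, ψ_1, …, ψ_n : ℝ → ℝ^d (with the Euclidean metric) be continuous maps each of whose restriction to every interval [t_l, t_{l+1}] is affine. Assume that for every l < τ and all i ≠ j, the set {t ∈ [t_l, t_{l+1}] : dist(σ(t), ψ_i(t)) = dist(σ(t), ψ_j(t))} has at most 2 elements. Define D_σ(t) = max_{1≤i≤n} dist(σ(t), ψ_i(t)). Then there exist K ≤ τ(2n − 1), a partition t_0 = s_0 < s_1 < … < s_K = t_τ, and indices j_1, …, j_K such that for each k and every t ∈ [s_{k−1}, s_k], D_σ(t) = dist(σ(t), ψ_{j_k}(t)); in particular, on each interval [s_{k−1}, s_k] there are reals a, b, c with D_σ(t) = √(a·t² + b·t + c). -/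
/-!
On each interval `[t_l, t_{l+1}]`, cut at the endpoints and at every point where two of the
distances `dist (σ t) (ψ i t)` coincide. On each resulting piece no two distances cross, so by the
intermediate value theorem a single one of them is the maximum throughout. Now take a cutting of
`[t_l, t_{l+1}]` with as few such pieces as possible. Its sequence of maximising indices has no
two equal neighbours (they could be merged) and no alternation `a … b … a … b` (that would force
three coincidences of the `a`- and `b`-distances). A Davenport–Schinzel sequence of this kind
over `n` symbols has length at most `2n - 1`, because every transition `k → k + 1` is the last
occurrence of its left symbol or the first occurrence of its right one. Concatenating over the
`τ` intervals gives at most `τ(2n - 1)` pieces, and on each piece `D_σ` is the distance between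
two affine motions, the square root of a quadratic in `t`.
-/

open Set

theorem length_le_of_davenportSchinzel {ι : Type*} [Fintype ι] {K : ℕ} (j : Fin (K + 1) → ι)
    (hadj : ∀ k : Fin K, j k.castSucc ≠ j k.succ)
    (habab : ∀ a b c d : Fin (K + 1), a < b → b < c → c < d → j a = j c → j b = j d → j a = j b) :
    K + 1 ≤ 2 * Fintype.card ι - 1 := by
  classical
  set L := Finset.univ.filter fun k : Fin K => ∀ p, k.castSucc < p → j p ≠ j k.castSucc
  set F := Finset.univ.filter fun k : Fin K => ∀ q, q < k.succ → j q ≠ j k.succ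
  have hcover : Finset.univ ⊆ L ∪ F := by
    intro k _
    by_contra hk
    simp only [L, F, Finset.mem_union, Finset.mem_filter, Finset.mem_univ, true_and, not_or,
      not_forall, not_not] at hk
    obtain ⟨⟨p, hkp, hp⟩, ⟨q, hqk, hq⟩⟩ := hk
    have hqk' : q < k.castSucc := by
      refine lt_of_le_of_ne (Fin.le_castSucc_iff.mpr hqk) ?_
      rintro rfl
      exact hadj k hq
    have hkp' : k.succ < p := by
      refine lt_of_le_of_ne (Fin.castSucc_lt_iff_succ_le.mp hkp) ?_
      rintro rfl
      exact hadj k hp.symm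
    exact hadj k ((habab q _ _ p hqk' k.castSucc_lt_succ hkp' hq hp.symm).symm.trans hq)
  have hL : L.card ≤ Fintype.card ι - 1 := by
    rw [← Finset.card_univ, ← Finset.card_erase_of_mem (Finset.mem_univ (j (Fin.last K)))]
    refine Finset.card_le_card_of_injOn (fun k => j k.castSucc) ?_ ?_
    · intro k hk
      simp only [L, Finset.coe_filter, Finset.mem_univ, true_and, mem_ofPred_eq] at hk
      simpa using (hk _ (Fin.castSucc_lt_last k)).symm
    · intro k hk k' hk' hkk'
      simp only [L, Finset.coe_filter, Finset.mem_univ, true_and, mem_ofPred_eq] at hk hk'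
      rcases lt_trichotomy k k' with h | h | h
      · exact absurd hkk'.symm (hk _ (Fin.castSucc_lt_castSucc_iff.mpr h))
      · exact h
      · exact absurd hkk' (hk' _ (Fin.castSucc_lt_castSucc_iff.mpr h))
  have hF : F.card ≤ Fintype.card ι - 1 := by
    rw [← Finset.card_univ, ← Finset.card_erase_of_mem (Finset.mem_univ (j 0))]
    refine Finset.card_le_card_of_injOn (fun k => j k.succ) ?_ ?_
    · intro k hk
      simp only [F, Finset.coe_filter, Finset.mem_univ, true_and, mem_ofPred_eq] at hk
      simpa [eq_comm] using hk _ (Fin.succ_pos k)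
    · intro k hk k' hk' hkk'
      simp only [F, Finset.coe_filter, Finset.mem_univ, true_and, mem_ofPred_eq] at hk hk'
      rcases lt_trichotomy k k' with h | h | h
      · exact absurd hkk' (hk' _ (Fin.succ_lt_succ_iff.mpr h))
      · exact h
      · exact absurd hkk'.symm (hk _ (Fin.succ_lt_succ_iff.mpr h))
  have := (Finset.card_le_card hcover).trans (Finset.card_union_le L F)
  simp only [Finset.card_univ, Fintype.card_fin] at this
  have : 0 < Fintype.card ι := Fintype.card_pos_iff.mpr ⟨j 0⟩
  omega

def HasPartition (P : ℝ → ℝ → Prop) (α β : ℝ) (K : ℕ) : Prop :=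
  ∃ s : Fin (K + 1) → ℝ, StrictMono s ∧ s 0 = α ∧ s (Fin.last K) = β ∧
    ∀ k : Fin K, P (s k.castSucc) (s k.succ)

namespace HasPartition

variable {P Q : ℝ → ℝ → Prop} {α β γ : ℝ} {K K' : ℕ}

theorem mono (h : HasPartition P α β K) (hPQ : ∀ x y, α ≤ x → y ≤ β → P x y → Q x y) :
    HasPartition Q α β K := by
  obtain ⟨s, hs, hs0, hsK, hP⟩ := h
  refine ⟨s, hs, hs0, hsK, fun k => hPQ _ _ ?_ ?_ (hP k)⟩
  · exact hs0 ▸ hs.monotone (Fin.zero_le _)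
  · exact hsK ▸ hs.monotone (Fin.le_last _)

theorem append (h₁ : HasPartition P α β K) (h₂ : HasPartition P β γ K') :
    HasPartition P α γ (K + K') := by
  obtain ⟨s₁, hs₁, hs₁0, hs₁K, hP₁⟩ := h₁
  obtain ⟨s₂, hs₂, hs₂0, hs₂K, hP₂⟩ := h₂
  let s : Fin (K + K' + 1) → ℝ := fun i =>
    if hi : (i : ℕ) ≤ K then s₁ ⟨i, by omega⟩ else s₂ ⟨i - K, by omega⟩
  have hs_left : ∀ (i : Fin (K + K' + 1)) (k : Fin (K + 1)), (i : ℕ) = k → s i = s₁ k := by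
    intro i k hik
    simp only [s, hik, Nat.lt_succ_iff.mp k.2, dite_true]
  have hs_right : ∀ (i : Fin (K + K' + 1)) (k : Fin (K' + 1)), (i : ℕ) = K + k → s i = s₂ k := by
    intro i k hik
    rcases Nat.eq_zero_or_pos (k : ℕ) with hk | hk
    · obtain rfl : k = 0 := Fin.ext hk
      rw [hs₂0, ← hs₁K]
      exact hs_left i _ (by simp [hik])
    · simp only [s, hik, show ¬ K + (k : ℕ) ≤ K by omega, dite_false, Nat.add_sub_cancel_left]
  have hpiece : ∀ i : Fin (K + K'),
      (∃ k : Fin K, s i.castSucc = s₁ k.castSucc ∧ s i.succ = s₁ k.succ) ∨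
      (∃ k : Fin K', s i.castSucc = s₂ k.castSucc ∧ s i.succ = s₂ k.succ) := by
    intro i
    by_cases hi : (i : ℕ) < K
    · exact .inl ⟨⟨i, hi⟩, hs_left _ _ rfl, hs_left _ _ rfl⟩
    · refine .inr ⟨⟨i - K, by omega⟩, hs_right _ _ ?_, hs_right _ _ ?_⟩ <;> simp <;> omega
  refine ⟨s, Fin.strictMono_iff_lt_succ.mpr fun i => ?_, ?_, ?_, fun i => ?_⟩
  · rcases hpiece i with ⟨k, h, h'⟩ | ⟨k, h, h'⟩
    · rw [h, h']; exact hs₁ k.castSucc_lt_succ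
    · rw [h, h']; exact hs₂ k.castSucc_lt_succ
  · rw [hs_left 0 0 rfl, hs₁0]
  · rw [hs_right _ (Fin.last K') (by simp), hs₂K]
  · rcases hpiece i with ⟨k, h, h'⟩ | ⟨k, h, h'⟩
    · rw [h, h']; exact hP₁ k
    · rw [h, h']; exact hP₂ k

theorem exists_le_mul_of_forall {m B : ℕ} (ts : Fin (m + 1) → ℝ)
    (h : ∀ l : Fin m, ∃ K ≤ B, HasPartition P (ts l.castSucc) (ts l.succ) K) :
    ∃ K ≤ m * B, HasPartition P (ts 0) (ts (Fin.last m)) K := by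
  induction m with
  | zero =>
    exact ⟨0, Nat.zero_le _, fun _ => ts 0, Fin.strictMono_iff_lt_succ.mpr Fin.elim0, rfl, rfl,
      Fin.elim0⟩
  | succ m ih =>
    obtain ⟨K₁, hK₁, h₁⟩ := ih (Fin.init ts) fun l => h l.castSucc
    obtain ⟨K₂, hK₂, h₂⟩ := h (Fin.last m)
    exact ⟨K₁ + K₂, by rw [Nat.succ_mul]; omega, h₁.append h₂⟩

end HasPartition

section Envelope

variable {ι : Type*} {f : ι → ℝ → ℝ}

def IsTopOn (f : ι → ℝ → ℝ) (i : ι) (S : Set ℝ) : Prop :=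
  ∀ t ∈ S, ∀ i', f i' t ≤ f i t

theorem IsTopOn.Icc_union {i : ι} {x y z : ℝ} (h₁ : IsTopOn f i (Icc x y))
    (h₂ : IsTopOn f i (Icc y z)) : IsTopOn f i (Icc x z) := by
  intro t ht
  rcases le_total t y with hty | hyt
  · exact h₁ t ⟨ht.1, hty⟩
  · exact h₂ t ⟨hyt, ht.2⟩

theorem exists_isTopOn_Icc [Finite ι] [Nonempty ι] {x y : ℝ} (hxy : x < y)
    (hf : ∀ i, ContinuousOn (f i) (Icc x y))
    (hne : ∀ i i', i ≠ i' → ∀ t ∈ Ioo x y, f i t ≠ f i' t) :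
    ∃ i, IsTopOn f i (Icc x y) := by
  have hmid : (x + y) / 2 ∈ Ioo x y := ⟨by linarith, by linarith⟩
  obtain ⟨i, hi⟩ := Finite.exists_max fun i => f i ((x + y) / 2)
  refine ⟨i, fun t ht i' => ?_⟩
  rw [← closure_Ioo hxy.ne] at ht hf
  refine le_on_closure (fun t ht => ?_) (hf i') (hf i) ht
  -- `f i' - f i` is `≤ 0` at the midpoint and has no zero in `Ioo x y`.
  by_contra hlt
  have hi' : i' ≠ i := by rintro rfl; exact hlt le_rfl
  obtain ⟨z, hz, hz0⟩ := isPreconnected_Ioo.intermediate_value hmid ht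
    ((hf i').mono subset_closure |>.sub ((hf i).mono subset_closure))
    ⟨sub_nonpos.mpr (hi i'), (sub_pos.mpr (not_le.mp hlt)).le⟩
  exact hne i' i hi' z hz (sub_eq_zero.mp hz0)

def IsEnvelopePartition_s12 (f : ι → ℝ → ℝ) (α β : ℝ) {K : ℕ} (s : Fin (K + 1) → ℝ)
    (j : Fin K → ι) : Prop :=
  StrictMono s ∧ s 0 = α ∧ s (Fin.last K) = β ∧
    ∀ k : Fin K, IsTopOn f (j k) (Icc (s k.castSucc) (s k.succ))

variable {α β : ℝ}

theorem exists_isEnvelopePartition_s12 [Finite ι] [Nonempty ι] (hαβ : α < β)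
    (hf : ∀ i, ContinuousOn (f i) (Icc α β))
    (hfin : ∀ i i', i ≠ i' → {t ∈ Icc α β | f i t = f i' t}.Finite) :
    ∃ (K : ℕ) (s : Fin (K + 1) → ℝ) (j : Fin K → ι), IsEnvelopePartition_s12 f α β s j := by
  classical
  set C : Set ℝ := insert α (insert β (⋃ (i) (i') (_ : i ≠ i'), {t ∈ Icc α β | f i t = f i' t}))
  have hC : C.Finite := ((finite_iUnion fun i => finite_iUnion fun i' =>
    finite_iUnion fun h => hfin i i' h).insert β).insert α
  have hCsub : C ⊆ Icc α β := by
    refine insert_subset ⟨le_rfl, hαβ.le⟩ (insert_subset ⟨hαβ.le, le_rfl⟩ ?_)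
    simp only [iUnion_subset_iff]
    exact fun _ _ _ => sep_subset _ _
  have hcard : hC.toFinset.card = hC.toFinset.card - 1 + 1 :=
    (Nat.sub_add_cancel (Finset.card_pos.mpr ⟨α, by simp [C]⟩)).symm
  set s := hC.toFinset.orderEmbOfFin hcard
  have hrange : range s = C := by rw [Finset.range_orderEmbOfFin, hC.coe_toFinset]
  have hsC : ∀ k, s k ∈ C := fun k => hrange.le (mem_range_self k)
  have hgap : ∀ k : Fin (hC.toFinset.card - 1),
      ∃ i, IsTopOn f i (Icc (s k.castSucc) (s k.succ)) := by
    intro k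
    have hsub : Icc (s k.castSucc) (s k.succ) ⊆ Icc α β :=
      Icc_subset_Icc (hCsub (hsC _)).1 (hCsub (hsC _)).2
    refine exists_isTopOn_Icc (s.strictMono k.castSucc_lt_succ) (fun i => (hf i).mono hsub) ?_
    intro i i' hii' t ht heq
    have htC : t ∈ C := by
      refine mem_insert_of_mem _ (mem_insert_of_mem _ ?_)
      simp only [mem_iUnion]
      exact ⟨i, i', hii', Ioo_subset_Icc_self.trans hsub ht, heq⟩
    rw [← hrange] at htC
    obtain ⟨m, rfl⟩ := htC
    have h₁ := s.lt_iff_lt.mp ht.1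
    have h₂ := s.lt_iff_lt.mp ht.2
    simp only [Fin.lt_def, Fin.val_castSucc, Fin.val_succ] at h₁ h₂
    omega
  choose j hj using hgap
  refine ⟨_, s, j, s.strictMono, ?_, ?_, hj⟩
  · refine le_antisymm ?_ (hCsub (hsC 0)).1
    obtain ⟨m, hm⟩ : α ∈ range s := hrange.ge (mem_insert α _)
    exact hm ▸ s.monotone (Fin.zero_le m)
  · refine le_antisymm (hCsub (hsC _)).2 ?_
    obtain ⟨m, hm⟩ : β ∈ range s := hrange.ge (mem_insert_of_mem _ (mem_insert β _))
    exact hm ▸ s.monotone (Fin.le_last m)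

theorem two_lt_encard_zeros_of_sign_changes {g : ℝ → ℝ} {t₁ t₂ t₃ t₄ : ℝ}
    (hg : ContinuousOn g (Icc t₁ t₄)) (h₁₂ : t₁ ≤ t₂) (h₂₃ : t₂ ≤ t₃) (h₃₄ : t₃ ≤ t₄)
    (hg₁ : 0 ≤ g t₁) (hg₂ : g t₂ < 0) (hg₃ : 0 < g t₃) (hg₄ : g t₄ ≤ 0) :
    2 < {t ∈ Icc t₁ t₄ | g t = 0}.encard := by
  obtain ⟨z₁, hz₁, hgz₁⟩ := intermediate_value_Icc' h₁₂
    (hg.mono (Icc_subset_Icc_right (h₂₃.trans h₃₄))) ⟨hg₂.le, hg₁⟩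
  obtain ⟨z₂, hz₂, hgz₂⟩ := intermediate_value_Icc h₂₃
    (hg.mono (Icc_subset_Icc h₁₂ h₃₄)) ⟨hg₂.le, hg₃.le⟩
  obtain ⟨z₃, hz₃, hgz₃⟩ := intermediate_value_Icc' h₃₄
    (hg.mono (Icc_subset_Icc_left (h₁₂.trans h₂₃))) ⟨hg₄, hg₃.le⟩
  have hz₁₂ : z₁ < z₂ := (lt_of_le_of_ne hz₁.2 (by rintro rfl; linarith)).trans_le hz₂.1
  have hz₂₃ : z₂ < z₃ := (lt_of_le_of_ne hz₂.2 (by rintro rfl; linarith)).trans_le hz₃.1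
  calc (2 : ℕ∞) < 3 := by norm_num
    _ = ({z₁, z₂, z₃} : Set ℝ).encard :=
      (encard_eq_three.mpr ⟨z₁, z₂, z₃, hz₁₂.ne, (hz₁₂.trans hz₂₃).ne, hz₂₃.ne, rfl⟩).symm
    _ ≤ _ := by
      refine encard_le_encard ?_
      rintro z (rfl | rfl | rfl)
      · exact ⟨⟨hz₁.1, hz₁.2.trans (h₂₃.trans h₃₄)⟩, hgz₁⟩
      · exact ⟨⟨h₁₂.trans hz₂.1, hz₂.2.trans h₃₄⟩, hgz₂⟩
      · exact ⟨⟨(h₁₂.trans h₂₃).trans hz₃.1, hz₃.2⟩, hgz₃⟩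

theorem IsTopOn.exists_lt {i i' : ι} {x y : ℝ} (h : IsTopOn f i (Icc x y)) (hxy : x < y)
    (hfin : {t ∈ Icc x y | f i' t = f i t}.Finite) : ∃ t ∈ Icc x y, f i' t < f i t := by
  by_contra! hge
  refine (Icc_infinite hxy).mono ?_ hfin
  exact fun t ht => ⟨ht, le_antisymm (h t ht i') (hge t ht)⟩

namespace IsEnvelopePartition_s12

variable {K : ℕ} {s : Fin (K + 1) → ℝ} {j : Fin K → ι}

theorem Icc_subset (h : IsEnvelopePartition_s12 f α β s j) (p q : Fin (K + 1)) :
    Icc (s p) (s q) ⊆ Icc α β :=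
  Icc_subset_Icc (h.2.1 ▸ h.1.monotone (Fin.zero_le p)) (h.2.2.1 ▸ h.1.monotone (Fin.le_last q))

theorem eq_of_abab (h : IsEnvelopePartition_s12 f α β s j) (hf : ∀ i, ContinuousOn (f i) (Icc α β))
    (hpair : ∀ i i', i ≠ i' → {t ∈ Icc α β | f i t = f i' t}.encard ≤ 2)
    {a b c d : Fin K} (hab : a < b) (hbc : b < c) (hcd : c < d) (hac : j a = j c)
    (hbd : j b = j d) : j a = j b := by
  by_contra hne
  have hfin : ∀ i i', i ≠ i' → ∀ p q : Fin (K + 1),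
      {t ∈ Icc (s p) (s q) | f i t = f i' t}.Finite := fun i i' hii' p q =>
    (finite_of_encard_le_coe (hpair i i' hii')).subset fun t ht => ⟨h.Icc_subset p q ht.1, ht.2⟩
  have hsign₁ : f (j b) (s a.castSucc) ≤ f (j a) (s a.castSucc) :=
    h.2.2.2 a _ ⟨le_rfl, (h.1 a.castSucc_lt_succ).le⟩ _
  obtain ⟨t₂, ht₂, hsign₂⟩ := (h.2.2.2 b).exists_lt (h.1 b.castSucc_lt_succ) (hfin _ _ hne _ _)
  obtain ⟨t₃, ht₃, hsign₃⟩ := (h.2.2.2 c).exists_lt (h.1 c.castSucc_lt_succ)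
    (hfin _ _ (hac ▸ Ne.symm hne) _ _)
  rw [← hac] at hsign₃
  have hsign₄ : f (j a) (s d.succ) ≤ f (j b) (s d.succ) := by
    rw [hbd]
    exact h.2.2.2 d _ ⟨(h.1 d.castSucc_lt_succ).le, le_rfl⟩ _
  have hzeros := two_lt_encard_zeros_of_sign_changes (g := fun t => f (j a) t - f (j b) t)
    (((hf _).sub (hf _)).mono (h.Icc_subset a.castSucc d.succ))
    ((h.1.monotone (Fin.castSucc_le_castSucc_iff.mpr hab.le)).trans ht₂.1)
    (ht₂.2.trans ((h.1.monotone (Fin.succ_le_castSucc_iff.mpr hbc)).trans ht₃.1))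
    (ht₃.2.trans (h.1.monotone (Fin.succ_le_succ_iff.mpr hcd.le)))
    (sub_nonneg.mpr hsign₁) (sub_neg.mpr hsign₂) (sub_pos.mpr hsign₃) (sub_nonpos.mpr hsign₄)
  refine (hpair (j a) (j b) hne).not_gt (hzeros.trans_le (encard_le_encard fun t ht => ?_))
  exact ⟨h.Icc_subset _ _ ht.1, sub_eq_zero.mp ht.2⟩

theorem removeNode {K : ℕ} {s : Fin (K + 2) → ℝ} {j : Fin (K + 1) → ι}
    (h : IsEnvelopePartition_s12 f α β s j) (k : Fin K) (hk : j k.castSucc = j k.succ) :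
    IsEnvelopePartition_s12 f α β (s ∘ k.succ.castSucc.succAbove) (j ∘ k.succ.succAbove) := by
  obtain ⟨hs, hs0, hsK, hj⟩ := h
  refine ⟨hs.comp (Fin.strictMono_succAbove _), ?_, ?_, fun m => ?_⟩
  · rwa [Function.comp_apply,
      Fin.succAbove_ne_zero_zero (Fin.castSucc_ne_zero_iff.mpr k.succ_ne_zero)]
  · rwa [Function.comp_apply, Fin.succAbove_ne_last_last (Fin.castSucc_lt_last _).ne]
  simp only [Function.comp_apply]
  rcases lt_trichotomy m k with hm | rfl | hm
  · rw [Fin.succAbove_castSucc_of_lt _ _ (Fin.castSucc_lt_succ_iff.mpr hm.le),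
      Fin.succAbove_castSucc_of_lt _ _ (Fin.succ_lt_succ_iff.mpr hm),
      Fin.succAbove_succ_of_le _ _ hm.le, ← Fin.succ_castSucc]
    exact hj m.castSucc
  · rw [Fin.succAbove_castSucc_of_lt _ _ (Fin.castSucc_lt_succ_iff.mpr le_rfl),
      Fin.succAbove_castSucc_self, Fin.succAbove_succ_self]
    refine (hj m.castSucc).Icc_union ?_
    rw [hk, Fin.succ_castSucc]
    exact hj m.succ
  · rw [Fin.succAbove_castSucc_of_le _ _ (Fin.succ_le_castSucc_iff.mpr hm),
      Fin.succAbove_castSucc_of_le _ _ (Fin.succ_le_succ_iff.mpr hm.le),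
      Fin.succAbove_succ_of_lt _ _ hm, Fin.succ_castSucc]
    exact hj m.succ

theorem le_two_mul_card_sub_one_of_minimal [Fintype ι] {s : Fin (K + 2) → ℝ}
    {j : Fin (K + 1) → ι} (h : IsEnvelopePartition_s12 f α β s j)
    (hf : ∀ i, ContinuousOn (f i) (Icc α β))
    (hpair : ∀ i i', i ≠ i' → {t ∈ Icc α β | f i t = f i' t}.encard ≤ 2)
    (hmin : ∀ (s' : Fin (K + 1) → ℝ) (j' : Fin K → ι), ¬ IsEnvelopePartition_s12 f α β s' j') :
    K + 1 ≤ 2 * Fintype.card ι - 1 :=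
  length_le_of_davenportSchinzel j (fun k hk => hmin _ _ (h.removeNode k hk))
    fun _ _ _ _ hab hbc hcd hac hbd => h.eq_of_abab hf hpair hab hbc hcd hac hbd

end IsEnvelopePartition_s12

theorem exists_hasPartition_isTopOn [Fintype ι] [Nonempty ι] (hαβ : α < β)
    (hf : ∀ i, ContinuousOn (f i) (Icc α β))
    (hpair : ∀ i i', i ≠ i' → {t ∈ Icc α β | f i t = f i' t}.encard ≤ 2) :
    ∃ K ≤ 2 * Fintype.card ι - 1,
      HasPartition (fun x y => ∃ i, IsTopOn f i (Icc x y)) α β K := by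
  classical
  have hex := exists_isEnvelopePartition_s12 hαβ hf fun i i' h => finite_of_encard_le_coe (hpair i i' h)
  obtain ⟨K, ⟨s, j, h⟩, hmin⟩ : ∃ K, (∃ (s : Fin (K + 1) → ℝ) (j : Fin K → ι),
      IsEnvelopePartition_s12 f α β s j) ∧ ∀ K' < K, ¬ ∃ (s : Fin (K' + 1) → ℝ) (j : Fin K' → ι),
      IsEnvelopePartition_s12 f α β s j :=
    ⟨Nat.find hex, Nat.find_spec hex, fun _ => Nat.find_min hex⟩
  refine ⟨K, ?_, s, h.1, h.2.1, h.2.2.1, fun k => ⟨j k, h.2.2.2 k⟩⟩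
  cases K with
  | zero => exact Nat.zero_le _
  | succ K =>
    exact h.le_two_mul_card_sub_one_of_minimal hf hpair fun s' j' h' =>
      hmin K K.lt_succ_self ⟨s', j', h'⟩

end Envelope

theorem exists_dist_add_smul_eq_sqrt {E : Type*} [NormedAddCommGroup E] [InnerProductSpace ℝ E]
    (p v q w : E) :
    ∃ a b c : ℝ, ∀ t : ℝ, dist (p + t • v) (q + t • w) = √(a * t ^ 2 + b * t + c) := by
  refine ⟨‖v - w‖ ^ 2, 2 * inner ℝ (p - q) (v - w), ‖p - q‖ ^ 2, fun t => ?_⟩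
  rw [dist_eq_norm, ← Real.sqrt_sq (norm_nonneg _),
    show p + t • v - (q + t • w) = (p - q) + t • (v - w) by rw [smul_sub]; abel,
    norm_add_sq_real, real_inner_smul_right, norm_smul, Real.norm_eq_abs, mul_pow, sq_abs]
  ring_nf

theorem stmt12_general (d n τ : ℕ) (hn : 1 ≤ n)
    (ts : Fin (τ + 1) → ℝ) (hts : StrictMono ts)
    (σ : ℝ → EuclideanSpace ℝ (Fin d)) (ψ : Fin n → ℝ → EuclideanSpace ℝ (Fin d))
    (hσc : Continuous σ) (hψc : ∀ i, Continuous (ψ i))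
    (hσaff : ∀ l : Fin τ, ∃ p v : EuclideanSpace ℝ (Fin d),
      ∀ t ∈ Set.Icc (ts l.castSucc) (ts l.succ), σ t = p + t • v)
    (hψaff : ∀ (i : Fin n) (l : Fin τ), ∃ p v : EuclideanSpace ℝ (Fin d),
      ∀ t ∈ Set.Icc (ts l.castSucc) (ts l.succ), ψ i t = p + t • v)
    (hpair : ∀ (l : Fin τ) (i j : Fin n), i ≠ j →
      {t ∈ Set.Icc (ts l.castSucc) (ts l.succ) |
        dist (σ t) (ψ i t) = dist (σ t) (ψ j t)}.encard ≤ 2)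
    (Dσ : ℝ → ℝ)
    (hD : ∀ t, Dσ t = Finset.univ.sup' ⟨⟨0, hn⟩, Finset.mem_univ _⟩
        (fun i => dist (σ t) (ψ i t))) :
    ∃ K : ℕ, K ≤ τ * (2 * n - 1) ∧
      ∃ s : Fin (K + 1) → ℝ, StrictMono s ∧ s 0 = ts 0 ∧ s (Fin.last K) = ts (Fin.last τ) ∧
        ∃ jdx : Fin K → Fin n, ∀ k : Fin K,
          (∀ t ∈ Set.Icc (s k.castSucc) (s k.succ), Dσ t = dist (σ t) (ψ (jdx k) t))
          ∧ ∃ a b c : ℝ, ∀ t ∈ Set.Icc (s k.castSucc) (s k.succ),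
              Dσ t = Real.sqrt (a * t ^ 2 + b * t + c) := by
  have : Nonempty (Fin n) := ⟨⟨0, hn⟩⟩
  have hlocal : ∀ l : Fin τ, ∃ K ≤ 2 * n - 1, HasPartition
      (fun x y => ∃ i, (∀ t ∈ Icc x y, Dσ t = dist (σ t) (ψ i t)) ∧
        ∃ a b c : ℝ, ∀ t ∈ Icc x y, Dσ t = √(a * t ^ 2 + b * t + c))
      (ts l.castSucc) (ts l.succ) K := by
    intro l
    obtain ⟨K, hK, hpart⟩ := exists_hasPartition_isTopOn (f := fun i t => dist (σ t) (ψ i t))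
      (hts l.castSucc_lt_succ) (fun i => (hσc.dist (hψc i)).continuousOn) (hpair l)
    refine ⟨K, by simpa using hK, hpart.mono fun x y hx hy ⟨i, hi⟩ => ?_⟩
    have hDi : ∀ t ∈ Icc x y, Dσ t = dist (σ t) (ψ i t) := fun t ht => by
      rw [hD]
      exact le_antisymm (Finset.sup'_le _ _ fun i' _ => hi t ht i')
        (Finset.le_sup' (fun i => dist (σ t) (ψ i t)) (Finset.mem_univ i))
    obtain ⟨p, v, hσ⟩ := hσaff l
    obtain ⟨q, w, hψ⟩ := hψaff i l
    obtain ⟨a, b, c, habc⟩ := exists_dist_add_smul_eq_sqrt p v q w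
    refine ⟨i, hDi, a, b, c, fun t ht => ?_⟩
    have ht' : t ∈ Icc (ts l.castSucc) (ts l.succ) := ⟨hx.trans ht.1, ht.2.trans hy⟩
    rw [hDi t ht, hσ t ht', hψ t ht', habc]
  obtain ⟨K, hK, s, hs, hs0, hsK, hQ⟩ := HasPartition.exists_le_mul_of_forall ts hlocal
  choose jdx hjdx using hQ
  exact ⟨K, hK, s, hs, hs0, hsK, jdx, hjdx⟩

/-- Lemma 13 of the paper: the distance `D_σ` from a piecewise-linear trajectory `σ` to
its farthest entity among `ψ_1,…,ψ_n` (also piecewise linear, with common breakpoints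
`t_0 < … < t_τ`) is piecewise hyperbolic with at most `τ(2n − 1)` pieces. -/
theorem stmt12 (d n τ : ℕ) (hd : 1 ≤ d) (hn : 1 ≤ n) (hτ : 1 ≤ τ)
    (ts : Fin (τ + 1) → ℝ) (hts : StrictMono ts)
    (σ : ℝ → EuclideanSpace ℝ (Fin d)) (ψ : Fin n → ℝ → EuclideanSpace ℝ (Fin d))
    (hσc : Continuous σ) (hψc : ∀ i, Continuous (ψ i))
    (hσaff : ∀ l : Fin τ, ∃ p v : EuclideanSpace ℝ (Fin d),
      ∀ t ∈ Set.Icc (ts l.castSucc) (ts l.succ), σ t = p + t • v)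
    (hψaff : ∀ (i : Fin n) (l : Fin τ), ∃ p v : EuclideanSpace ℝ (Fin d),
      ∀ t ∈ Set.Icc (ts l.castSucc) (ts l.succ), ψ i t = p + t • v)
    (hpair : ∀ (l : Fin τ) (i j : Fin n), i ≠ j →
      {t ∈ Set.Icc (ts l.castSucc) (ts l.succ) |
        dist (σ t) (ψ i t) = dist (σ t) (ψ j t)}.encard ≤ 2)
    (Dσ : ℝ → ℝ)
    (hD : ∀ t, Dσ t = Finset.univ.sup' ⟨⟨0, hn⟩, Finset.mem_univ _⟩
        (fun i => dist (σ t) (ψ i t))) :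
    ∃ K : ℕ, K ≤ τ * (2 * n - 1) ∧
      ∃ s : Fin (K + 1) → ℝ, StrictMono s ∧ s 0 = ts 0 ∧ s (Fin.last K) = ts (Fin.last τ) ∧
        ∃ jdx : Fin K → Fin n, ∀ k : Fin K,
          (∀ t ∈ Set.Icc (s k.castSucc) (s k.succ), Dσ t = dist (σ t) (ψ (jdx k) t))
          ∧ ∃ a b c : ℝ, ∀ t ∈ Set.Icc (s k.castSucc) (s k.succ),
              Dσ t = Real.sqrt (a * t ^ 2 + b * t + c) :=
  stmt12_general d n τ hn ts hts σ ψ hσc hψc hσaff hψaff hpair Dσ hD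
end

section
/- Let A < B be reals, let M ≥ 1, and let h_1, h_2 : ℝ → ℝ be functions such that for each r ∈ {1,2} there is a partition of [A, B] into at most M subintervals on each of which h_r(t) = √(a·t² + b·t + c) for some reals a, b, c (with a·t² + b·t + c ≥ 0 on that subinterval). If the set {t ∈ [A, B] : h_1(t) = h_2(t)} is finite, then it has at most 2(2M − 1) elements. -/
/-!
Squaring turns an agreement point of two hyperbolic arcs into a root of the difference of the
two quadratics, so on an interval where both functions are single arcs they agree either
everywhere (excluded by finiteness) or at most twice. For a point `z`, count the pieces of each
partition that start at or before `z`: the two counts are monotone in `z`, with values in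
`[1, k₁]` and `[1, k₂]`, so their sum takes at most `k₁ + k₂ - 1` values. On a level set of the
sum both counts are constant, hence the level set lies in a single piece of each partition and
contains at most two agreement points.
-/

open Set
open scoped Finset

def IsHyperbolicOn (f : ℝ → ℝ) (S : Set ℝ) : Prop :=
  ∃ a b c : ℝ, (∀ t ∈ S, 0 ≤ a * t ^ 2 + b * t + c) ∧ ∀ t ∈ S, f t = √(a * t ^ 2 + b * t + c)

theorem IsHyperbolicOn.mono {f : ℝ → ℝ} {S T : Set ℝ} (hf : IsHyperbolicOn f S) (hTS : T ⊆ S) :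
    IsHyperbolicOn f T := by
  obtain ⟨a, b, c, hq, hfq⟩ := hf
  exact ⟨a, b, c, fun t ht => hq t (hTS ht), fun t ht => hfq t (hTS ht)⟩

theorem quadratic_eq_zero_of_three_roots {a b c x y z : ℝ} (hxy : x ≠ y) (hxz : x ≠ z)
    (hyz : y ≠ z) (hx : a * x ^ 2 + b * x + c = 0) (hy : a * y ^ 2 + b * y + c = 0)
    (hz : a * z ^ 2 + b * z + c = 0) : a = 0 ∧ b = 0 ∧ c = 0 := by
  have hxy' : a * (x + y) + b = 0 :=
    (mul_eq_zero.1 (by linear_combination hx - hy)).resolve_left (sub_ne_zero.2 hxy)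
  have hyz' : a * (y + z) + b = 0 :=
    (mul_eq_zero.1 (by linear_combination hy - hz)).resolve_left (sub_ne_zero.2 hyz)
  have ha : a = 0 :=
    (mul_eq_zero.1 (by linear_combination hxy' - hyz')).resolve_right (sub_ne_zero.2 hxz)
  have hb : b = 0 := by linear_combination hxy' - (x + y) * ha
  exact ⟨ha, hb, by linear_combination hx - x ^ 2 * ha - x * hb⟩

theorem IsHyperbolicOn.eqOn_of_three {f g : ℝ → ℝ} {S : Set ℝ} (hf : IsHyperbolicOn f S)
    (hg : IsHyperbolicOn g S) {x y z : ℝ} (hx : x ∈ S) (hy : y ∈ S) (hz : z ∈ S)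
    (hxy : x ≠ y) (hxz : x ≠ z) (hyz : y ≠ z) (hfx : f x = g x) (hfy : f y = g y)
    (hfz : f z = g z) : EqOn f g S := by
  obtain ⟨a, b, c, hq, hfq⟩ := hf
  obtain ⟨a', b', c', hq', hgq⟩ := hg
  have root : ∀ t ∈ S, f t = g t ↔ (a - a') * t ^ 2 + (b - b') * t + (c - c') = 0 := by
    intro t ht
    rw [hfq t ht, hgq t ht, Real.sqrt_inj (hq t ht) (hq' t ht), ← sub_eq_zero]
    ring_nf
  obtain ⟨ha, hb, hc⟩ := quadratic_eq_zero_of_three_roots hxy hxz hyz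
    ((root x hx).1 hfx) ((root y hy).1 hfy) ((root z hz).1 hfz)
  exact fun t ht => (root t ht).2 (by rw [ha, hb, hc]; ring)

theorem IsHyperbolicOn.encard_setOf_eq_le_two {f g : ℝ → ℝ} {S : Set ℝ} [S.OrdConnected]
    (hf : IsHyperbolicOn f S) (hg : IsHyperbolicOn g S) (hfin : {t ∈ S | f t = g t}.Finite) :
    {t ∈ S | f t = g t}.encard ≤ 2 := by
  by_contra! h
  rw [← hfin.cast_ncard_eq, Nat.ofNat_lt_cast, two_lt_ncard_iff hfin] at h
  obtain ⟨x, y, z, ⟨hx, hfx⟩, ⟨hy, hfy⟩, ⟨hz, hfz⟩, hxy, hxz, hyz⟩ := h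
  have hS : S.Infinite := by
    rcases hxy.lt_or_gt with hlt | hlt
    · exact (Icc_infinite hlt).mono (OrdConnected.out ‹_› hx hy)
    · exact (Icc_infinite hlt).mono (OrdConnected.out ‹_› hy hx)
  exact hS (hfin.subset fun t ht => ⟨ht, hf.eqOn_of_three hg hx hy hz hxy hxz hyz hfx hfy hfz ht⟩)

theorem IsHyperbolicOn.card_filter_mem_le_two {f g : ℝ → ℝ} {S T : Set ℝ} [T.OrdConnected]
    [DecidablePred (· ∈ T)] (hfin : {t ∈ S | f t = g t}.Finite) (hTS : T ⊆ S)
    (hf : IsHyperbolicOn f T) (hg : IsHyperbolicOn g T) : #{z ∈ hfin.toFinset | z ∈ T} ≤ 2 := by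
  have hsub : (({z ∈ hfin.toFinset | z ∈ T} : Finset ℝ) : Set ℝ) ⊆ {t ∈ T | f t = g t} :=
    fun t ht => by
      simp only [Finset.coe_filter, Set.Finite.mem_toFinset] at ht
      exact ⟨ht.2, ht.1.2⟩
  have hagree := hf.encard_setOf_eq_le_two hg (hfin.subset fun t ht => ⟨hTS ht.1, ht.2⟩)
  exact_mod_cast (encard_coe_eq_coe_finsetCard _).symm.trans_le ((encard_mono hsub).trans hagree)

section Partition

variable {k : ℕ} (s : Fin (k + 1) → ℝ)

abbrev piece (j : Fin k) : Set ℝ := Icc (s j.castSucc) (s j.succ)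

noncomputable def pieceCount (z : ℝ) : ℕ := #{j : Fin k | s j.castSucc ≤ z}

variable {s}

theorem pieceCount_mono : Monotone (pieceCount s) := fun _ _ hxy =>
  Finset.card_le_card (Finset.monotone_filter_right _ fun _ _ hj => hj.trans hxy)

theorem pieceCount_le (z : ℝ) : pieceCount s z ≤ k :=
  (Finset.card_filter_le _ _).trans (Finset.card_fin k).le

theorem pieceCount_pos (hk : 0 < k) {z : ℝ} (hz : s 0 ≤ z) : 0 < pieceCount s z :=
  Finset.card_pos.2 ⟨⟨0, hk⟩, by simpa using hz⟩

theorem piece_subset (hs : Monotone s) (j : Fin k) : piece s j ⊆ Icc (s 0) (s (Fin.last k)) :=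
  Icc_subset_Icc (hs (Fin.zero_le _)) (hs (Fin.le_last _))

theorem exists_Icc_subset_piece (hk : 0 < k) {x y : ℝ} (hx : s 0 ≤ x)
    (hxy : x ≤ y) (hy : y ≤ s (Fin.last k)) (hcount : pieceCount s x = pieceCount s y) :
    ∃ j, Icc x y ⊆ piece s j := by
  set J : Finset (Fin k) := {j | s j.castSucc ≤ x}
  have hJ : J.Nonempty := ⟨⟨0, hk⟩, by simpa [J] using hx⟩
  have hstart : ∀ j : Fin k, s j.castSucc ≤ y → j ∈ J := by
    have hJy : J = ({j | s j.castSucc ≤ y} : Finset (Fin k)) := Finset.eq_of_subset_of_card_le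
      (Finset.monotone_filter_right _ fun _ _ hj => hj.trans hxy) hcount.ge
    intro j hj
    simpa [hJy] using hj
  refine ⟨J.max' hJ, Icc_subset_Icc (by simpa [J] using J.max'_mem hJ) ?_⟩
  by_contra! hlt
  have hne : (J.max' hJ).succ ≠ Fin.last k := fun h => by
    rw [h] at hlt
    exact hlt.not_ge hy
  obtain ⟨j, hj⟩ := Fin.exists_castSucc_eq.2 hne
  have hjJ := J.le_max' j (hstart j (hj ▸ hlt.le))
  have hlt' : (J.max' hJ).castSucc < j.castSucc := hj ▸ Fin.castSucc_lt_succ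
  exact (Fin.castSucc_lt_castSucc_iff.1 hlt').not_ge hjJ

theorem card_le_mul_of_card_filter_mem_piece_le {k₁ k₂ : ℕ} {s₁ : Fin (k₁ + 1) → ℝ}
    {s₂ : Fin (k₂ + 1) → ℝ} (hk₁ : 0 < k₁) (hk₂ : 0 < k₂) {Z : Finset ℝ}
    (hZ₁ : ∀ z ∈ Z, z ∈ Icc (s₁ 0) (s₁ (Fin.last k₁)))
    (hZ₂ : ∀ z ∈ Z, z ∈ Icc (s₂ 0) (s₂ (Fin.last k₂))) (m : ℕ)
    (hm : ∀ j₁ j₂, #{z ∈ Z | z ∈ piece s₁ j₁ ∩ piece s₂ j₂} ≤ m) :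
    #Z ≤ m * (k₁ + k₂ - 1) := by
  have hmaps : ∀ z ∈ Z, pieceCount s₁ z + pieceCount s₂ z ∈ Finset.Icc 2 (k₁ + k₂) :=
    fun z hz => by
      have := pieceCount_pos hk₁ (hZ₁ z hz).1
      have := pieceCount_pos hk₂ (hZ₂ z hz).1
      have := pieceCount_le (s := s₁) z
      have := pieceCount_le (s := s₂) z
      rw [Finset.mem_Icc]
      omega
  have hfiber : ∀ n ∈ Finset.Icc 2 (k₁ + k₂),
      #{z ∈ Z | pieceCount s₁ z + pieceCount s₂ z = n} ≤ m := by
    intro n _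
    set W := {z ∈ Z | pieceCount s₁ z + pieceCount s₂ z = n}
    rcases W.eq_empty_or_nonempty with hW | hW
    · simp [hW]
    obtain ⟨x, hxW, hx⟩ : ∃ x ∈ W, ∀ z ∈ W, x ≤ z := ⟨_, W.min'_mem hW, W.min'_le⟩
    obtain ⟨y, hyW, hy⟩ : ∃ y ∈ W, ∀ z ∈ W, z ≤ y := ⟨_, W.max'_mem hW, W.le_max'⟩
    rw [Finset.mem_filter] at hxW hyW
    have hxy := hx y (Finset.mem_filter.2 hyW)
    have := pieceCount_mono (s := s₁) hxy
    have := pieceCount_mono (s := s₂) hxy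
    obtain ⟨j₁, hj₁⟩ := exists_Icc_subset_piece hk₁ (hZ₁ x hxW.1).1 hxy (hZ₁ y hyW.1).2 (by omega)
    obtain ⟨j₂, hj₂⟩ := exists_Icc_subset_piece hk₂ (hZ₂ x hxW.1).1 hxy (hZ₂ y hyW.1).2 (by omega)
    refine le_trans (Finset.card_le_card fun z hz => ?_) (hm j₁ j₂)
    have hz' : z ∈ Icc x y := ⟨hx z hz, hy z hz⟩
    exact Finset.mem_filter.2 ⟨(Finset.mem_filter.1 hz).1, hj₁ hz', hj₂ hz'⟩
  calc #Z ≤ m * #(Finset.Icc 2 (k₁ + k₂)) :=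
        Finset.card_le_mul_card_image_of_maps_to hmaps m hfiber
    _ = m * (k₁ + k₂ - 1) := by
        rw [Nat.card_Icc]
        rfl

end Partition

theorem stmt13_general (A B : ℝ) (M : ℕ)
    (h₁ h₂ : ℝ → ℝ)
    (hp : ∀ h : ℝ → ℝ, h = h₁ ∨ h = h₂ →
      ∃ k : ℕ, 1 ≤ k ∧ k ≤ M ∧
        ∃ s : Fin (k + 1) → ℝ, StrictMono s ∧ s 0 = A ∧ s (Fin.last k) = B ∧
          ∀ j : Fin k, ∃ a b c : ℝ,
            (∀ t ∈ Set.Icc (s j.castSucc) (s j.succ), 0 ≤ a * t ^ 2 + b * t + c)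
            ∧ ∀ t ∈ Set.Icc (s j.castSucc) (s j.succ),
                h t = Real.sqrt (a * t ^ 2 + b * t + c))
    (hfin : {t ∈ Set.Icc A B | h₁ t = h₂ t}.Finite) :
    {t ∈ Set.Icc A B | h₁ t = h₂ t}.encard ≤ 2 * (2 * M - 1 : ℕ) := by
  obtain ⟨k₁, hk₁, hk₁M, s₁, hs₁, rfl, rfl, hyp₁⟩ := hp h₁ (.inl rfl)
  obtain ⟨k₂, hk₂, hk₂M, s₂, -, hs₂A, hs₂B, hyp₂⟩ := hp h₂ (.inr rfl)
  have hcell : ∀ j₁ j₂, #{z ∈ hfin.toFinset | z ∈ piece s₁ j₁ ∩ piece s₂ j₂} ≤ 2 :=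
    fun j₁ j₂ => IsHyperbolicOn.card_filter_mem_le_two hfin
      (inter_subset_left.trans (piece_subset hs₁.monotone j₁))
      (IsHyperbolicOn.mono (hyp₁ j₁) inter_subset_left)
      (IsHyperbolicOn.mono (hyp₂ j₂) inter_subset_right)
  have hZ₁ : ∀ z ∈ hfin.toFinset, z ∈ Icc (s₁ 0) (s₁ (Fin.last k₁)) := fun z hz =>
    ((hfin.mem_toFinset).1 hz).1
  have hZ₂ : ∀ z ∈ hfin.toFinset, z ∈ Icc (s₂ 0) (s₂ (Fin.last k₂)) := fun z hz =>
    hs₂A ▸ hs₂B ▸ ((hfin.mem_toFinset).1 hz).1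
  have hcard := card_le_mul_of_card_filter_mem_piece_le hk₁ hk₂ hZ₁ hZ₂ 2 hcell
  rw [hfin.encard_eq_coe_toFinset_card]
  exact_mod_cast hcard.trans (by omega)

/-- Two piecewise hyperbolic functions on `[A,B]`, each with at most `M` pieces, agree
at most `2(2M − 1)` times (provided their agreement set is finite). -/
theorem stmt13 (A B : ℝ) (hAB : A < B) (M : ℕ) (hM : 1 ≤ M)
    (h₁ h₂ : ℝ → ℝ)
    (hp : ∀ h : ℝ → ℝ, h = h₁ ∨ h = h₂ →
      ∃ k : ℕ, 1 ≤ k ∧ k ≤ M ∧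
        ∃ s : Fin (k + 1) → ℝ, StrictMono s ∧ s 0 = A ∧ s (Fin.last k) = B ∧
          ∀ j : Fin k, ∃ a b c : ℝ,
            (∀ t ∈ Set.Icc (s j.castSucc) (s j.succ), 0 ≤ a * t ^ 2 + b * t + c)
            ∧ ∀ t ∈ Set.Icc (s j.castSucc) (s j.succ),
                h t = Real.sqrt (a * t ^ 2 + b * t + c))
    (hfin : {t ∈ Set.Icc A B | h₁ t = h₂ t}.Finite) :
    {t ∈ Set.Icc A B | h₁ t = h₂ t}.encard ≤ 2 * (2 * M - 1 : ℕ) :=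
  stmt13_general A B M h₁ h₂ hp hfin
end
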